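/- arXiv:1608.02049 — 9 statements merged into one kernel-verified Lean document; each statement's English description precedes it below -/
import Mathlib

section
/- Let (a_0, a_1, a_2, a_3, a_4; d_1, d_2) be a del Pezzo WCI datum. Then d_2 ≤ 2a_4. -/
set_option maxHeartbeats 800000


/-- `x` lies in the additive monoid `⟨b, c⟩` of non-negative integer combinations of `b` and `c`,
with membership taken in `ℤ`. -/
def InSpan2 (b c x : ℤ) : Prop := ∃ α β : ℕ, x = α * b + β * c

/-- `x` lies in the additive monoid `⟨b, c, d⟩` of non-negative integer combinations,
with membership taken in `ℤ`. -/
def InSpan3 (b c d x : ℤ) : Prop := ∃ α β γ : ℕ, x = α * b + β * c + γ * d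

/-- A *del Pezzo WCI datum*: Iano-Fletcher's arithmetic criteria for the general codimension-2
weighted complete intersection of multidegree `(d₁, d₂)` in `P(a 0, …, a 4)` to be a well-formed
quasi-smooth del Pezzo surface which is not an intersection with a linear cone. -/
structure IsDelPezzoWCI (a : Fin 5 → ℤ) (d₁ d₂ : ℤ) : Prop where
  a_pos : ∀ i, 0 < a i
  d₁_pos : 0 < d₁
  d₂_pos : 0 < d₂
  mono : ∀ i j : Fin 5, i ≤ j → a i ≤ a j
  d_le : d₁ ≤ d₂
  lc : ∀ i, d₁ ≠ a i ∧ d₂ ≠ a i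
  wf1 : ∀ s : Finset (Fin 5), s.card = 3 → (sᶜ.gcd a ∣ d₁ ∨ sᶜ.gcd a ∣ d₂)
  wf2 : ∀ s : Finset (Fin 5), s.card = 2 → (sᶜ.gcd a ∣ d₁ ∧ sᶜ.gcd a ∣ d₂)
  wf3 : ∀ i : Fin 5, ({i} : Finset (Fin 5))ᶜ.gcd a = 1
  qs1 : ∀ i, a i ∣ d₁ ∨ a i ∣ d₂ ∨
    ∃ e f : Fin 5, e ≠ f ∧ a i ∣ (d₁ - a e) ∧ a i ∣ (d₂ - a f)
  qs2 : ∀ i j : Fin 5, i ≠ j →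
    (InSpan2 (a i) (a j) d₁ ∧ InSpan2 (a i) (a j) d₂) ∨
    (InSpan2 (a i) (a j) d₁ ∧ ∃ e : Fin 5, InSpan2 (a i) (a j) (d₂ - a e)) ∨
    (InSpan2 (a i) (a j) d₂ ∧ ∃ e : Fin 5, InSpan2 (a i) (a j) (d₁ - a e)) ∨
    (∃ E F : Finset (Fin 5), E.card = 2 ∧ F.card = 2 ∧
      E ∪ F = ({i, j} : Finset (Fin 5))ᶜ ∧
      (∀ e ∈ E, InSpan2 (a i) (a j) (d₁ - a e)) ∧
      (∀ f ∈ F, InSpan2 (a i) (a j) (d₂ - a f)))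
  qs3 : ∀ k l m : Fin 5, k ≠ l → k ≠ m → l ≠ m →
    (InSpan3 (a k) (a l) (a m) d₁ ∧ InSpan3 (a k) (a l) (a m) d₂) ∨
    (InSpan3 (a k) (a l) (a m) d₁ ∧
      ∀ i ∈ ({k, l, m} : Finset (Fin 5))ᶜ, InSpan3 (a k) (a l) (a m) (d₂ - a i)) ∨
    (InSpan3 (a k) (a l) (a m) d₂ ∧
      ∀ i ∈ ({k, l, m} : Finset (Fin 5))ᶜ, InSpan3 (a k) (a l) (a m) (d₁ - a i))
  amp : 1 ≤ a 0 + a 1 + a 2 + a 3 + a 4 - d₁ - d₂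

private lemma span2_lb {b c x : ℤ} (hb : 0 ≤ b) (hbc : b ≤ c) {α β : ℕ}
    (hx : x = α * b + β * c) : ((α : ℤ) + β) * b ≤ x := by
  have h1 : (0:ℤ) ≤ (β:ℤ) := Int.natCast_nonneg β
  nlinarith [mul_nonneg h1 (sub_nonneg.mpr hbc)]

private lemma span2_ub {b c x : ℤ} (hb : 0 ≤ b) (hbc : b ≤ c) {α β : ℕ}
    (hx : x = α * b + β * c) : x ≤ ((α : ℤ) + β) * c := by
  have h1 : (0:ℤ) ≤ (α:ℤ) := Int.natCast_nonneg α
  nlinarith [mul_nonneg h1 (sub_nonneg.mpr hbc)]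

private lemma pair_min (a : Fin 5 → ℤ) (hm : ∀ i j : Fin 5, i ≤ j → a i ≤ a j)
    {e f : Fin 5} (hef : e ≠ f) : a 0 + a 1 ≤ a e + a f := by
  rcases hef.lt_or_gt with hlt | hlt
  · have h1 : a 0 ≤ a e := hm 0 e (Fin.zero_le e)
    have hv : e.val < f.val := Fin.lt_def.mp hlt
    have h2 : a 1 ≤ a f := hm 1 f (by rw [Fin.le_def, Fin.val_one]; omega)
    linarith
  · have h1 : a 0 ≤ a f := hm 0 f (Fin.zero_le f)
    have hv : f.val < e.val := Fin.lt_def.mp hlt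
    have h2 : a 1 ≤ a e := hm 1 e (by rw [Fin.le_def, Fin.val_one]; omega)
    linarith

theorem corollary1_d2_le (a : Fin 5 → ℤ) (d₁ d₂ : ℤ) (h : IsDelPezzoWCI a d₁ d₂) :
    d₂ ≤ 2 * a 4 := by
  by_contra hcon
  push_neg at hcon
  have p0 := h.a_pos 0
  have p1 := h.a_pos 1
  have p2 := h.a_pos 2
  have p3 := h.a_pos 3
  have p4 := h.a_pos 4
  have h01 := h.mono 0 1 (by decide)
  have h12 := h.mono 1 2 (by decide)
  have h23 := h.mono 2 3 (by decide)
  have h34 := h.mono 3 4 (by decide)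
  have hamp := h.amp
  have hd1p := h.d₁_pos
  have hd2p := h.d₂_pos
  have hdle := h.d_le
  have hle4 : ∀ i : Fin 5, a i ≤ a 4 := fun i => h.mono i 4 (Fin.le_last i)
  rcases h.qs1 4 with hdiv | hdiv | ⟨e, f, hef, he, hf⟩
  · -- Case 1 : a 4 ∣ d₁
    obtain ⟨k, hk⟩ := hdiv
    have hk2 : 2 ≤ k := by
      by_contra hk'
      push_neg at hk'
      rcases (by omega : k = 1 ∨ k ≤ 0) with h1 | h1
      · exact (h.lc 4).1 (by rw [hk, h1, mul_one])
      · nlinarith [mul_nonneg p4.le (neg_nonneg.mpr h1)]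
    have hd1ge : 2 * a 4 ≤ d₁ := by nlinarith [mul_le_mul_of_nonneg_left hk2 p4.le]
    have hub : d₂ ≤ a 0 + a 1 + a 2 + a 3 - a 4 - 1 := by linarith
    have key : InSpan2 (a 3) (a 4) d₂ ∨ ∃ g : Fin 5, InSpan2 (a 3) (a 4) (d₂ - a g) := by
      rcases h.qs2 3 4 (by decide) with ⟨_, h2⟩ | ⟨_, g, h2⟩ | ⟨h2, _⟩ | ⟨E, F, _, hF2, _, _, hFs⟩
      · exact Or.inl h2
      · exact Or.inr ⟨g, h2⟩
      · exact Or.inl h2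
      · obtain ⟨g, hg⟩ := Finset.card_pos.mp (by rw [hF2]; norm_num)
        exact Or.inr ⟨g, hFs g hg⟩
    rcases key with ⟨α, β, hx⟩ | ⟨g, α, β, hx⟩
    · have lb := span2_lb p3.le h34 hx
      have ub := span2_ub p3.le h34 hx
      have hN : (3:ℤ) ≤ (α:ℤ) + β := by
        by_contra hN'
        push_neg at hN'
        have hN2 : (α:ℤ) + β ≤ 2 := by omega
        nlinarith [mul_nonneg (by linarith : (0:ℤ) ≤ 2 - ((α:ℤ) + β)) p4.le]
      nlinarith [mul_nonneg (by linarith : (0:ℤ) ≤ (α:ℤ) + β - 3) p3.le]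
    · have hg0 : a 0 ≤ a g := h.mono 0 g (Fin.zero_le g)
      have hg4 : a g ≤ a 4 := hle4 g
      have lb := span2_lb p3.le h34 hx
      have ub := span2_ub p3.le h34 hx
      have hN : (2:ℤ) ≤ (α:ℤ) + β := by
        by_contra hN'
        push_neg at hN'
        have hN1 : (α:ℤ) + β ≤ 1 := by omega
        nlinarith [mul_nonneg (by linarith : (0:ℤ) ≤ 1 - ((α:ℤ) + β)) p4.le]
      nlinarith [mul_nonneg (by linarith : (0:ℤ) ≤ (α:ℤ) + β - 2) p3.le]
  · -- Case 2 : a 4 ∣ d₂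
    obtain ⟨k, hk⟩ := hdiv
    have hk3 : 3 ≤ k := by
      by_contra hk'
      push_neg at hk'
      have hk2 : k ≤ 2 := by omega
      nlinarith [mul_le_mul_of_nonneg_left hk2 p4.le]
    have hd2ge : 3 * a 4 ≤ d₂ := by nlinarith [mul_le_mul_of_nonneg_left hk3 p4.le]
    have hub : d₁ ≤ a 0 + a 1 - 1 := by linarith
    have key : InSpan2 (a 1) (a 2) d₁ ∨ ∃ g : Fin 5, InSpan2 (a 1) (a 2) (d₁ - a g) := by
      rcases h.qs2 1 2 (by decide) with ⟨h2, _⟩ | ⟨h2, _⟩ | ⟨_, g, h2⟩ | ⟨E, F, hE2, _, _, hEs, _⟩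
      · exact Or.inl h2
      · exact Or.inl h2
      · exact Or.inr ⟨g, h2⟩
      · obtain ⟨g, hg⟩ := Finset.card_pos.mp (by rw [hE2]; norm_num)
        exact Or.inr ⟨g, hEs g hg⟩
    rcases key with ⟨α, β, hx⟩ | ⟨g, α, β, hx⟩
    · have lb := span2_lb p1.le h12 hx
      have hN1 : α + β ≤ 1 := by
        by_contra hN'
        push_neg at hN'
        have h2le : (2:ℤ) ≤ (α:ℤ) + β := by omega
        nlinarith [mul_nonneg (by linarith : (0:ℤ) ≤ (α:ℤ) + β - 2) p1.le]
      rcases (by omega : (α = 0 ∧ β = 0) ∨ (α = 1 ∧ β = 0) ∨ (α = 0 ∧ β = 1)) with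
        ⟨rfl, rfl⟩ | ⟨rfl, rfl⟩ | ⟨rfl, rfl⟩
      · push_cast at hx; linarith
      · exact (h.lc 1).1 (by push_cast at hx; linarith)
      · exact (h.lc 2).1 (by push_cast at hx; linarith)
    · have hg0 : a 0 ≤ a g := h.mono 0 g (Fin.zero_le g)
      have lb := span2_lb p1.le h12 hx
      by_cases hz : α = 0 ∧ β = 0
      · obtain ⟨rfl, rfl⟩ := hz
        push_cast at hx
        exact (h.lc g).1 (by linarith)
      · have hN1 : (1:ℤ) ≤ (α:ℤ) + β := by omega
        linarith [mul_nonneg (by linarith : (0:ℤ) ≤ (α:ℤ) + β - 1) p1.le]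
  · -- Case 3 : mixed
    obtain ⟨k, hk⟩ := he
    obtain ⟨m, hm⟩ := hf
    have hge : a 0 ≤ a e := h.mono 0 e (Fin.zero_le e)
    have hgf : a 0 ≤ a f := h.mono 0 f (Fin.zero_le f)
    have hle_e : a e ≤ a 4 := hle4 e
    have hle_f : a f ≤ a 4 := hle4 f
    have hpair : a 0 + a 1 ≤ a e + a f := pair_min a h.mono hef
    have hk1 : 1 ≤ k := by
      by_contra hk'
      push_neg at hk'
      rcases (by omega : k = 0 ∨ k ≤ -1) with h1 | h1
      · rw [h1, mul_zero] at hk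
        exact (h.lc e).1 (by linarith)
      · nlinarith [mul_nonneg p4.le (by linarith : (0:ℤ) ≤ -1 - k)]
    have hm2 : 2 ≤ m := by
      by_contra hm'
      push_neg at hm'
      have hm1 : m ≤ 1 := by omega
      nlinarith [mul_nonneg p4.le (by linarith : (0:ℤ) ≤ 1 - m)]
    have hd1' : a 4 + a e ≤ d₁ := by
      nlinarith [mul_nonneg p4.le (by linarith : (0:ℤ) ≤ k - 1)]
    have hd2' : 2 * a 4 + a f ≤ d₂ := by
      nlinarith [mul_nonneg p4.le (by linarith : (0:ℤ) ≤ m - 2)]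
    linarith
end

section
/- Let (a_0, a_1, a_2, a_3, a_4; d_1, d_2) be a del Pezzo WCI datum. If three of the five weights coincide (i.e. a_i = a_j = a_k for some indices i < j < k), then a_4 ≤ 3. -/
theorem Int.eq_of_dvd_of_lt_two_mul {a b : ℤ} (ha : 0 < a) (hdvd : b ∣ a) (hlt : a < 2 * b) :
    a = b := by
  lift a to ℕ using ha.le
  lift b to ℕ using by omega
  exact_mod_cast Nat.eq_of_dvd_of_lt_two_mul (by omega) (by exact_mod_cast hdvd)
    (by exact_mod_cast hlt)

theorem Int.two_mul_le_of_dvd_of_ne {a b : ℤ} (ha : 0 < a) (hdvd : b ∣ a) (hne : a ≠ b) :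
    2 * b ≤ a :=
  le_of_not_gt fun hlt => hne (Int.eq_of_dvd_of_lt_two_mul ha hdvd hlt)

theorem IsCoprime.int_le_one_of_dvd {x y c : ℤ} (h : IsCoprime x y) (hx : c ∣ x) (hy : c ∣ y) :
    c ≤ 1 := by
  rcases Int.isUnit_iff.mp (h.isUnit_of_dvd' hx hy) with rfl | rfl <;> norm_num

theorem Monotone.three_eq_consecutive {a : Fin 5 → ℤ} (hmono : Monotone a) {i j k : Fin 5}
    (hij : i < j) (hjk : j < k) (hik : a i = a k) :
    (a 1 = a 0 ∧ a 2 = a 0) ∨ (a 2 = a 1 ∧ a 3 = a 1) ∨ (a 2 = a 4 ∧ a 3 = a 4) := by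
  have h01 := hmono (show (0 : Fin 5) ≤ 1 by decide)
  have h12 := hmono (show (1 : Fin 5) ≤ 2 by decide)
  have h23 := hmono (show (2 : Fin 5) ≤ 3 by decide)
  have h34 := hmono (show (3 : Fin 5) ≤ 4 by decide)
  fin_cases i <;> fin_cases j <;> fin_cases k <;> simp at hij hjk hik ⊢ <;> omega

namespace IsDelPezzoWCI

variable {a : Fin 5 → ℤ} {d₁ d₂ s t q p r : ℤ}

theorem dvd_one_of_forall_ne_dvd (h : IsDelPezzoWCI a d₁ d₂) (i : Fin 5) {c : ℤ}
    (hc : ∀ m ≠ i, c ∣ a m) : c ∣ 1 :=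
  h.wf3 i ▸ Finset.dvd_gcd fun m hm => hc m (by simpa using hm)

theorem isCoprime_of_forall_ne (h : IsDelPezzoWCI a d₁ d₂) (i : Fin 5) {x y : ℤ}
    (hxy : ∀ m ≠ i, a m = x ∨ a m = y) : IsCoprime x y := by
  rw [Int.isCoprime_iff_gcd_eq_one, ← Nat.dvd_one, ← Int.natCast_dvd_natCast]
  refine h.dvd_one_of_forall_ne_dvd i fun m hm => ?_
  rcases hxy m hm with hm | hm <;> rw [hm]
  exacts [Int.gcd_dvd_left x y, Int.gcd_dvd_right x y]

theorem dvd_of_eq_of_eq (h : IsDelPezzoWCI a d₁ d₂) {i j k : Fin 5} (hij : i ≠ j) (hik : i ≠ k)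
    (hjk : j ≠ k) (hj : a j = a i) (hk : a k = a i) : a i ∣ d₁ ∧ a i ∣ d₂ := by
  have hcard : ({i, j, k}ᶜ : Finset (Fin 5)).card = 2 := by
    rw [Finset.card_compl, Finset.card_insert_of_notMem (by simp [hij, hik]),
      Finset.card_pair hjk]
    rfl
  have hgcd : a i ∣ ({i, j, k}ᶜᶜ : Finset (Fin 5)).gcd a := by
    refine Finset.dvd_gcd fun m hm => ?_
    rw [compl_compl] at hm
    simp only [Finset.mem_insert, Finset.mem_singleton] at hm
    rcases hm with rfl | rfl | rfl <;> simp [hj, hk]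
  exact ⟨hgcd.trans (h.wf2 _ hcard).1, hgcd.trans (h.wf2 _ hcard).2⟩

theorem dvd_or_dvd_of_eq (h : IsDelPezzoWCI a d₁ d₂) {i j : Fin 5} (hij : i ≠ j)
    (hj : a j = a i) : a i ∣ d₁ ∨ a i ∣ d₂ := by
  have hcard : ({i, j}ᶜ : Finset (Fin 5)).card = 3 := by
    rw [Finset.card_compl, Finset.card_pair hij]
    rfl
  have hgcd : a i ∣ ({i, j}ᶜᶜ : Finset (Fin 5)).gcd a := by
    refine Finset.dvd_gcd fun m hm => ?_
    rw [compl_compl] at hm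
    simp only [Finset.mem_insert, Finset.mem_singleton] at hm
    rcases hm with rfl | rfl <;> simp [hj]
  exact (h.wf1 _ hcard).imp hgcd.trans hgcd.trans

theorem dvd_or_exists_dvd_sub_of_eq (h : IsDelPezzoWCI a d₁ d₂) {i j : Fin 5} (hij : i ≠ j)
    (hj : a j = a i) : a i ∣ d₁ ∨ ∃ e, a i ∣ d₁ - a e := by
  have hspan : ∀ {x}, InSpan2 (a i) (a j) x → a i ∣ x := by
    rintro x ⟨α, β, rfl⟩
    rw [hj]
    exact dvd_add (dvd_mul_left _ _) (dvd_mul_left _ _)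
  rcases h.qs2 i j hij with ⟨h₁, -⟩ | ⟨h₁, -⟩ | ⟨-, e, he⟩ | ⟨E, -, hE, -, -, hE₁, -⟩
  · exact .inl (hspan h₁)
  · exact .inl (hspan h₁)
  · exact .inr ⟨e, hspan he⟩
  · obtain ⟨e, he⟩ := Finset.card_pos.mp (by omega : 0 < E.card)
    exact .inr ⟨e, hspan (hE₁ e he)⟩

theorem exists_ne_dvd_sub_of_not_dvd (h : IsDelPezzoWCI a d₁ d₂) (i : Fin 5)
    (h₁ : ¬ a i ∣ d₁) (h₂ : ¬ a i ∣ d₂) :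
    ∃ e f, e ≠ f ∧ a i ∣ d₁ - a e ∧ a i ∣ d₂ - a f := by
  simpa [h₁, h₂] using h.qs1 i

theorem two_mul_le_left (h : IsDelPezzoWCI a d₁ d₂) {i : Fin 5} (hi : a i ∣ d₁) :
    2 * a i ≤ d₁ :=
  Int.two_mul_le_of_dvd_of_ne h.d₁_pos hi (h.lc i).1

theorem two_mul_le_right (h : IsDelPezzoWCI a d₁ d₂) {i : Fin 5} (hi : a i ∣ d₂) :
    2 * a i ≤ d₂ :=
  Int.two_mul_le_of_dvd_of_ne h.d₂_pos hi (h.lc i).2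

theorem dvd_of_first_three_eq (h : IsDelPezzoWCI ![q, q, q, p, r] d₁ d₂) : q ∣ d₁ ∧ q ∣ d₂ :=
  h.dvd_of_eq_of_eq (i := 0) (j := 1) (k := 2) (by decide) (by decide) (by decide) rfl rfl

theorem isCoprime_of_first_three_eq (h : IsDelPezzoWCI ![q, q, q, p, r] d₁ d₂) : IsCoprime q r :=
  h.isCoprime_of_forall_ne 3 fun m hm => by fin_cases m <;> simp_all

theorem not_dvd_left_of_first_three_eq (h : IsDelPezzoWCI ![q, q, q, p, r] d₁ d₂)
    (hr : 4 ≤ r) : ¬ r ∣ d₁ := fun hr₁ => by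
  have hq : 0 < q := by simpa using h.a_pos 0
  have hpr : p ≤ r := by simpa using h.mono 3 4 (by decide)
  have hamp : 1 ≤ q + q + q + p + r - d₁ - d₂ := by simpa using h.amp
  have hqr : q * r ≤ d₁ :=
    Int.le_of_dvd h.d₁_pos (h.isCoprime_of_first_three_eq.mul_dvd h.dvd_of_first_three_eq.1 hr₁)
  have h2r : 2 * r ≤ d₁ := h.two_mul_le_left (i := 4) hr₁
  have hle := h.d_le
  obtain rfl | hq2 : q = 1 ∨ 2 ≤ q := by omega
  · omega
  · nlinarith

theorem eq_of_first_three_eq_of_dvd_right (h : IsDelPezzoWCI ![q, q, q, p, r] d₁ d₂)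
    (hr : 4 ≤ r) (hr₂ : r ∣ d₂) : p = r ∧ d₁ = 2 * q := by
  have hq : 0 < q := by simpa using h.a_pos 0
  have hpr : p ≤ r := by simpa using h.mono 3 4 (by decide)
  have hamp : 1 ≤ q + q + q + p + r - d₁ - d₂ := by simpa using h.amp
  obtain ⟨hq₁, hq₂⟩ := h.dvd_of_first_three_eq
  have hd₁ : 2 * q ≤ d₁ := h.two_mul_le_left (i := 0) hq₁
  have hd₂ : 2 * r ≤ d₂ := h.two_mul_le_right (i := 4) hr₂
  have hcop := h.isCoprime_of_first_three_eq
  have hqr : q * r ≤ d₂ := Int.le_of_dvd h.d₂_pos (hcop.mul_dvd hq₂ hr₂)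
  have hpr : p = r := by
    obtain rfl | rfl : q = 1 ∨ q = 2 := by
      have : q ≤ 2 := by nlinarith
      omega
    · omega
    have hp : ¬ 2 ∣ p := fun hp => by
      have := Int.le_of_dvd one_pos
        (h.dvd_one_of_forall_ne_dvd 4 (c := 2) fun m hm => by fin_cases m <;> simp_all)
      omega
    have hr : ¬ 2 ∣ r := fun hr => by
      have := hcop.int_le_one_of_dvd dvd_rfl hr
      omega
    omega
  refine ⟨hpr, ?_⟩
  have := Int.eq_of_dvd_of_lt_two_mul (by omega) (dvd_sub_self_right.mpr hq₁) (by omega)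
  omega

theorem not_dvd_right_of_first_three_eq (h : IsDelPezzoWCI ![q, q, q, p, r] d₁ d₂)
    (hr : 4 ≤ r) : ¬ r ∣ d₂ := fun hr₂ => by
  obtain ⟨hpr, rfl⟩ := h.eq_of_first_three_eq_of_dvd_right hr hr₂
  subst p
  have hcop := h.isCoprime_of_first_three_eq.symm
  have hr2q : ¬ r ∣ 2 * q := fun hr2q => by
    have := Int.le_of_dvd two_pos (hcop.dvd_of_dvd_mul_right hr2q)
    omega
  have hrq : ¬ r ∣ q := fun hrq => by
    have := hcop.int_le_one_of_dvd dvd_rfl hrq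
    omega
  obtain hrd | ⟨e, he⟩ := h.dvd_or_exists_dvd_sub_of_eq (i := 4) (j := 3) (by decide) rfl
  · exact hr2q hrd
  fin_cases e
  · exact hrq (by simpa [two_mul] using he)
  · exact hrq (by simpa [two_mul] using he)
  · exact hrq (by simpa [two_mul] using he)
  · exact hr2q (dvd_sub_self_right.mp he)
  · exact hr2q (dvd_sub_self_right.mp he)

theorem eq_of_first_three_eq_of_not_dvd (h : IsDelPezzoWCI ![q, q, q, p, r] d₁ d₂)
    (hr₁ : ¬ r ∣ d₁) (hr₂ : ¬ r ∣ d₂) : p = r := by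
  have hq : 0 < q := by simpa using h.a_pos 0
  have hqp : q ≤ p := by simpa using h.mono 2 3 (by decide)
  have hpr : p ≤ r := by simpa using h.mono 3 4 (by decide)
  have hamp : 1 ≤ q + q + q + p + r - d₁ - d₂ := by simpa using h.amp
  obtain ⟨hq₁, hq₂⟩ := h.dvd_of_first_three_eq
  have hd₁ : 2 * q ≤ d₁ := h.two_mul_le_left (i := 0) hq₁
  have hd₂ : 2 * q ≤ d₂ := h.two_mul_le_right (i := 0) hq₂
  have hcop := h.isCoprime_of_first_three_eq
  have key : ∀ d e, q ∣ d → 2 * q ≤ d → d ≤ q + p + r - 1 → d ≠ p → ¬ r ∣ d →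
      r ∣ d - ![q, q, q, p, r] e → q + r ≤ d ∧ (e = 3 ∨ q = 1) := by
    intro d e hqd hd hd' hdp hrd he
    have hrdq : r ∣ d - q → q + r ≤ d ∧ q = 1 := fun hrdq => by
      have hdq : d - q = r := Int.eq_of_dvd_of_lt_two_mul (by omega) hrdq (by omega)
      have := hcop.int_le_one_of_dvd dvd_rfl (hdq ▸ dvd_sub hqd dvd_rfl)
      omega
    fin_cases e
    · exact (hrdq he).imp_right .inr
    · exact (hrdq he).imp_right .inr
    · exact (hrdq he).imp_right .inr
    · refine ⟨?_, .inl rfl⟩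
      rcases lt_or_gt_of_ne (sub_ne_zero.mpr hdp) with hlt | hgt
      · have := Int.le_of_dvd (neg_pos.mpr hlt) (dvd_neg.mpr he)
        omega
      · have := Int.le_of_dvd hgt he
        omega
    · exact absurd (dvd_sub_self_right.mp he) hrd
  obtain ⟨e, f, hef, he, hf⟩ := h.exists_ne_dvd_sub_of_not_dvd 4 hr₁ hr₂
  obtain ⟨hqr₁, he'⟩ := key d₁ e hq₁ hd₁ (by omega) (h.lc 3).1 hr₁ he
  obtain ⟨hqr₂, hf'⟩ := key d₂ f hq₂ hd₂ (by omega) (h.lc 3).2 hr₂ hf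
  have hq1 : q = 1 := by
    rcases he' with rfl | hq1
    · exact hf'.resolve_left (Ne.symm hef)
    · exact hq1
  omega

theorem le_three_of_first_three_eq (h : IsDelPezzoWCI ![q, q, q, p, r] d₁ d₂) : r ≤ 3 := by
  by_contra! hr
  have hr₁ := h.not_dvd_left_of_first_three_eq hr
  have hr₂ := h.not_dvd_right_of_first_three_eq hr
  obtain rfl := h.eq_of_first_three_eq_of_not_dvd hr₁ hr₂
  exact (h.dvd_or_dvd_of_eq (i := 4) (j := 3) (by decide) rfl).elim hr₁ hr₂

theorem le_three_of_middle_three_eq (h : IsDelPezzoWCI ![s, q, q, q, r] d₁ d₂)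
    (hsq : s < q) : r ≤ 3 := by
  by_contra! hr
  have hs : 0 < s := by simpa using h.a_pos 0
  have hqr : q ≤ r := by simpa using h.mono 3 4 (by decide)
  have hamp : 1 ≤ s + q + q + q + r - d₁ - d₂ := by simpa using h.amp
  obtain ⟨hq₁, hq₂⟩ := h.dvd_of_eq_of_eq (i := 1) (j := 2) (k := 3) (by decide) (by decide)
    (by decide) rfl rfl
  have hd₁ := h.two_mul_le_left hq₁
  have hd₂ := h.two_mul_le_right hq₂
  simp only [Matrix.cons_val] at hq₁ hq₂ hd₁ hd₂
  have hcop : IsCoprime q r := h.isCoprime_of_forall_ne 0 fun m hm => by fin_cases m <;> simp_all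
  have key : ∀ d, q ∣ d → 2 * q ≤ d → d ≤ s + q + r - 1 →
      ¬ r ∣ d ∧ ∀ e, r ∣ d - ![s, q, q, q, r] e → e = 0 := by
    intro d hqd hd hd'
    have hrd : ¬ r ∣ d := fun hrd => by
      have := Int.le_of_dvd (by omega) (hcop.mul_dvd hqd hrd)
      nlinarith [mul_pos (by omega : (0 : ℤ) < q - 1) (by omega : (0 : ℤ) < r - 2)]
    have hrdq : ¬ r ∣ d - q := fun hrdq => by
      have hdq : d - q = r := Int.eq_of_dvd_of_lt_two_mul (by omega) hrdq (by omega)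
      have := hcop.int_le_one_of_dvd dvd_rfl (hdq ▸ dvd_sub hqd dvd_rfl)
      omega
    refine ⟨hrd, fun e he => ?_⟩
    fin_cases e
    · rfl
    · exact absurd he hrdq
    · exact absurd he hrdq
    · exact absurd he hrdq
    · exact absurd (dvd_sub_self_right.mp he) hrd
  obtain ⟨hr₁, he₁⟩ := key d₁ hq₁ hd₁ (by omega)
  obtain ⟨hr₂, he₂⟩ := key d₂ hq₂ hd₂ (by omega)
  obtain ⟨e, f, hef, he, hf⟩ := h.exists_ne_dvd_sub_of_not_dvd 4 hr₁ hr₂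
  exact hef ((he₁ e he).trans (he₂ f hf).symm)

theorem le_three_of_last_three_eq (h : IsDelPezzoWCI ![s, t, q, q, q] d₁ d₂) : q ≤ 3 := by
  by_contra! hq
  have hst : s ≤ t := by simpa using h.mono 0 1 (by decide)
  have htq : t ≤ q := by simpa using h.mono 1 2 (by decide)
  have hamp : 1 ≤ s + t + q + q + q - d₁ - d₂ := by simpa using h.amp
  obtain ⟨hq₁, hq₂⟩ := h.dvd_of_eq_of_eq (i := 2) (j := 3) (k := 4) (by decide) (by decide)
    (by decide) rfl rfl
  have hd₁ := h.two_mul_le_left hq₁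
  have hd₂ := h.two_mul_le_right hq₂
  simp only [Matrix.cons_val] at hq₁ hq₂ hd₁ hd₂
  obtain rfl : d₂ = 2 * q := by
    have := Int.eq_of_dvd_of_lt_two_mul (by omega) (dvd_sub_self_right.mpr hq₂) (by omega)
    omega
  obtain rfl : d₁ = 2 * q := by linarith [h.d_le]
  have hcop : IsCoprime t q := h.isCoprime_of_forall_ne 0 fun m hm => by fin_cases m <;> simp_all
  have ht2q : ¬ t ∣ 2 * q := fun ht => by
    have := Int.le_of_dvd two_pos (hcop.dvd_of_dvd_mul_right ht)
    omega
  have hndvd : ¬ t ∣ q := fun ht => by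
    have := hcop.int_le_one_of_dvd dvd_rfl ht
    omega
  have key : ∀ e, t ∣ 2 * q - ![s, t, q, q, q] e → e = 0 := by
    intro e he
    fin_cases e <;> simp only at he
    · rfl
    · exact absurd (dvd_sub_self_right.mp he) ht2q
    all_goals exact absurd (by simpa [two_mul] using he) hndvd
  obtain ⟨e, f, hef, he, hf⟩ := h.exists_ne_dvd_sub_of_not_dvd 1 ht2q ht2q
  exact hef ((key e he).trans (key f hf).symm)

end IsDelPezzoWCI

theorem lemma3_three_equal_weights (a : Fin 5 → ℤ) (d₁ d₂ : ℤ) (h : IsDelPezzoWCI a d₁ d₂)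
    (hthree : ∃ i j k : Fin 5, i < j ∧ j < k ∧ a i = a j ∧ a j = a k) :
    a 4 ≤ 3 := by
  obtain ⟨i, j, k, hij, hjk, hj, hk⟩ := hthree
  have hmono : Monotone a := fun m n => h.mono m n
  obtain ⟨h1, h2⟩ | ⟨h2, h3⟩ | ⟨h2, h3⟩ := hmono.three_eq_consecutive hij hjk (hj.trans hk)
  · have ha : a = ![a 0, a 0, a 0, a 3, a 4] := by funext m; fin_cases m <;> simp [h1, h2]
    exact (ha ▸ h).le_three_of_first_three_eq
  · obtain h0 | h0 := (hmono (show (0 : Fin 5) ≤ 1 by decide)).lt_or_eq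
    · have ha : a = ![a 0, a 1, a 1, a 1, a 4] := by funext m; fin_cases m <;> simp [h2, h3]
      exact (ha ▸ h).le_three_of_middle_three_eq h0
    · have ha : a = ![a 1, a 1, a 1, a 1, a 4] := by funext m; fin_cases m <;> simp [h0, h2, h3]
      exact (ha ▸ h).le_three_of_first_three_eq
  · have ha : a = ![a 0, a 1, a 4, a 4, a 4] := by funext m; fin_cases m <;> simp [h2, h3]
    exact (ha ▸ h).le_three_of_last_three_eq
end

section
/- Let a_0, a_1, a_2, a_3, a_4 be integers with 1 ≤ a_0 < a_1 < a_2 < a_3 < a_4 < 2a_3. Then for all distinct i, j ∈ {0,1,2}: a_i + a_4 − a_j ∈ ⟨a_3, a_4⟩ if and only if either (i > j and a_4 = 2a_3 + a_j − a_i) or (i < j and a_4 = a_3 + a_j − a_i). -/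
lemma key (b c d : ℤ) (hb : 0 < b) (hbc : b < c) (hcb : c < 2 * b)
    (hd0 : d ≠ 0) (hd1 : -b < d) (hd2 : d < b) :
    InSpan2 b c (d + c) ↔ (0 < d ∧ c = 2 * b - d) ∨ (d < 0 ∧ c = b - d) := by
  constructor
  · rintro ⟨α, β, h⟩
    have hα : (0:ℤ) ≤ (α:ℤ) := Int.ofNat_nonneg α
    have hβ : (0:ℤ) ≤ (β:ℤ) := Int.ofNat_nonneg β
    have hαb : (0:ℤ) ≤ (α:ℤ) * b := mul_nonneg hα hb.le
    have hβ1 : (β:ℤ) ≤ 1 := by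
      by_contra hcon
      have h2 : (2:ℤ) ≤ (β:ℤ) := by omega
      have : 2 * c ≤ (β:ℤ) * c := mul_le_mul_of_nonneg_right h2 (by linarith)
      linarith
    have hβn : β = 0 ∨ β = 1 := by omega
    rcases hβn with rfl | rfl
    · -- β = 0
      simp only [Nat.cast_zero, zero_mul, add_zero] at h
      have hα1 : (1:ℤ) ≤ (α:ℤ) := by
        rcases Nat.eq_zero_or_pos α with h0 | h0
        · subst h0; simp at h; linarith
        · exact_mod_cast h0
      have hα2 : (α:ℤ) ≤ 2 := by
        by_contra hcon
        have h3 : (3:ℤ) ≤ (α:ℤ) := by omega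
        have : 3 * b ≤ (α:ℤ) * b := mul_le_mul_of_nonneg_right h3 hb.le
        linarith
      have hαn : α = 1 ∨ α = 2 := by omega
      rcases hαn with rfl | rfl
      · right
        push_cast at h
        constructor <;> linarith
      · left
        push_cast at h
        constructor <;> linarith
    · -- β = 1
      simp only [Nat.cast_one, one_mul] at h
      have hd : d = (α:ℤ) * b := by linarith
      rcases Nat.eq_zero_or_pos α with h0 | h0
      · subst h0; simp at hd; exact absurd hd hd0
      · have hα1 : (1:ℤ) ≤ (α:ℤ) := by exact_mod_cast h0
        have : 1 * b ≤ (α:ℤ) * b := mul_le_mul_of_nonneg_right hα1 hb.le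
        linarith
  · rintro (⟨hpos, hc⟩ | ⟨hneg, hc⟩)
    · exact ⟨2, 0, by push_cast; linarith⟩
    · exact ⟨1, 0, by push_cast; linarith⟩

theorem lemma7_part2 (a : Fin 5 → ℤ) (h0 : 1 ≤ a 0) (h01 : a 0 < a 1) (h12 : a 1 < a 2)
    (h23 : a 2 < a 3) (h34 : a 3 < a 4) (h43 : a 4 < 2 * a 3) :
    ∀ i j : Fin 5, (i : ℕ) < 3 → (j : ℕ) < 3 → i ≠ j →
      (InSpan2 (a 3) (a 4) (a i + a 4 - a j) ↔
        ((j < i ∧ a 4 = 2 * a 3 + a j - a i) ∨ (i < j ∧ a 4 = a 3 + a j - a i))) := by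
  have hb : (0:ℤ) < a 3 := by linarith
  intro i j hi hj hij
  have hx : a i + a 4 - a j = (a i - a j) + a 4 := by ring
  rw [hx]
  fin_cases i <;> fin_cases j <;> simp_all (config := {decide := true}) [Fin.lt_def] <;>
    rw [key (a 3) (a 4) _ hb h34 h43 (by omega) (by omega) (by omega)] <;>
    constructor <;> intro h <;> omega
end

section
/- Let a_0, a_1, a_2, a_3, a_4 be integers with 1 ≤ a_0 < a_1 < a_2 < a_3 < a_4 and a_4 < a_2 + a_3, and set d_1 = a_0 + a_4 and d_2 = a_1 + a_4. Then the following condition holds: [either d_1 ∈ ⟨a_3,a_4⟩ and d_2 ∈ ⟨a_3,a_4⟩; or d_1 ∈ ⟨a_3,a_4⟩ and d_2 − a_e ∈ ⟨a_3,a_4⟩ for some e ∈ {0,…,4}; or d_2 ∈ ⟨a_3,a_4⟩ and d_1 − a_e ∈ ⟨a_3,a_4⟩ for some e ∈ {0,…,4}; or there exist two-element subsets E, F of {0,1,2} with E ∪ F = {0,1,2}, d_1 − a_e ∈ ⟨a_3,a_4⟩ for all e ∈ E, and d_2 − a_f ∈ ⟨a_3,a_4⟩ for all f ∈ F] if and only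 if: a_4 = 2a_3 − a_0, or a_4 = 2a_3 − a_1, or (a_2 = 2a_1 − a_0 and a_4 = a_3 + a_1 − a_0), or (a_3 = a_2 + a_1 − 2a_0 and a_4 = 2a_2 + a_1 − 3a_0). -/
/-- Iano-Fletcher's quasi-smoothness condition for the pair of indices `(i, j) = (3, 4)` for a
codimension-2 weighted complete intersection of multidegree `(d₁, d₂)` in `P(a 0, …, a 4)`. -/
def QS34 (a : Fin 5 → ℤ) (d₁ d₂ : ℤ) : Prop :=
  (InSpan2 (a 3) (a 4) d₁ ∧ InSpan2 (a 3) (a 4) d₂) ∨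
  (InSpan2 (a 3) (a 4) d₁ ∧ ∃ e : Fin 5, InSpan2 (a 3) (a 4) (d₂ - a e)) ∨
  (InSpan2 (a 3) (a 4) d₂ ∧ ∃ e : Fin 5, InSpan2 (a 3) (a 4) (d₁ - a e)) ∨
  (∃ E F : Finset (Fin 5), E.card = 2 ∧ F.card = 2 ∧
    E ∪ F = ({0, 1, 2} : Finset (Fin 5)) ∧
    (∀ e ∈ E, InSpan2 (a 3) (a 4) (d₁ - a e)) ∧
    (∀ f ∈ F, InSpan2 (a 3) (a 4) (d₂ - a f)))

lemma spanA {a3 a4 x : ℤ} (h3 : 0 < a3) (h34 : a3 < a4) (h : a4 < 2*a3)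
    (h0 : 0 < x) (h1 : x < a4) (hx : InSpan2 a3 a4 x) : x = a3 := by
  obtain ⟨α, β, hab⟩ := hx
  have hA : (0:ℤ) ≤ (α:ℤ) := Int.natCast_nonneg α
  have hB : (0:ℤ) ≤ (β:ℤ) := Int.natCast_nonneg β
  have ha4 : (0:ℤ) < a4 := by linarith
  have hB1 : (β:ℤ) = 0 := by nlinarith [mul_nonneg hA h3.le]
  rw [hB1] at hab
  have hA1 : (α:ℤ) = 1 := by nlinarith
  rw [hA1] at hab; linarith

lemma spanB {a3 a4 x : ℤ} (h3 : 0 < a3) (h34 : a3 < a4) (h : a4 < 2*a3)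
    (h0 : a4 < x) (h1 : x < a3 + a4) (hx : InSpan2 a3 a4 x) : x = 2*a3 := by
  obtain ⟨α, β, hab⟩ := hx
  have hA : (0:ℤ) ≤ (α:ℤ) := Int.natCast_nonneg α
  have hB : (0:ℤ) ≤ (β:ℤ) := Int.natCast_nonneg β
  have ha4 : (0:ℤ) < a4 := by linarith
  have hB1 : (β:ℤ) ≤ 1 := by nlinarith [mul_nonneg hA h3.le]
  have hB01 : (β:ℤ) = 0 ∨ (β:ℤ) = 1 := by omega
  rcases hB01 with hb | hb <;> rw [hb] at hab
  · have hA2 : (α:ℤ) = 2 := by nlinarith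
    rw [hA2] at hab; linarith
  · have hA0 : (α:ℤ) = 0 := by nlinarith
    rw [hA0] at hab; linarith

lemma enumEF : ∀ E F : Finset (Fin 5), E.card = 2 → F.card = 2 →
    E ∪ F = ({0,1,2} : Finset (Fin 5)) →
    (E = {0,1} ∧ F = {0,2}) ∨ (E = {0,1} ∧ F = {1,2}) ∨ (E = {0,2} ∧ F = {0,1}) ∨
    (E = {0,2} ∧ F = {1,2}) ∨ (E = {1,2} ∧ F = {0,1}) ∨ (E = {1,2} ∧ F = {0,2}) := by
  decide

theorem corollary2_case01 (a : Fin 5 → ℤ) (h0 : 1 ≤ a 0) (h01 : a 0 < a 1) (h12 : a 1 < a 2)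
    (h23 : a 2 < a 3) (h34 : a 3 < a 4) (hdP : a 4 < a 2 + a 3) :
    QS34 a (a 0 + a 4) (a 1 + a 4) ↔
      (a 4 = 2 * a 3 - a 0 ∨
       a 4 = 2 * a 3 - a 1 ∨
       (a 2 = 2 * a 1 - a 0 ∧ a 4 = a 3 + a 1 - a 0) ∨
       (a 3 = a 2 + a 1 - 2 * a 0 ∧ a 4 = 2 * a 2 + a 1 - 3 * a 0)) := by
  have h3p : 0 < a 3 := by linarith
  have h2a3 : a 4 < 2 * a 3 := by linarith
  constructor
  · rintro (⟨hd1, -⟩ | ⟨hd1, -⟩ | ⟨hd2, -⟩ | ⟨E, F, hEc, hFc, hEF, hE, hF⟩)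
    · have := spanB h3p h34 h2a3 (by linarith) (by linarith) hd1
      omega
    · have := spanB h3p h34 h2a3 (by linarith) (by linarith) hd1
      omega
    · have := spanB h3p h34 h2a3 (by linarith) (by linarith) hd2
      omega
    · rcases enumEF E F hEc hFc hEF with ⟨hEq, hFq⟩ | ⟨hEq, hFq⟩ | ⟨hEq, hFq⟩ |
        ⟨hEq, hFq⟩ | ⟨hEq, hFq⟩ | ⟨hEq, hFq⟩ <;> subst hEq <;> subst hFq
      · -- E={0,1}, F={0,2}: need d1-a1=a3 and d2-a2=a3
        have e1 := spanA h3p h34 h2a3 (by linarith) (by linarith)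
          (hE 1 (by decide))
        have e2 := spanA h3p h34 h2a3 (by linarith) (by linarith)
          (hF 2 (by decide))
        omega
      · have e1 := spanA h3p h34 h2a3 (by linarith) (by linarith)
          (hE 1 (by decide))
        have e2 := spanA h3p h34 h2a3 (by linarith) (by linarith)
          (hF 2 (by decide))
        omega
      · -- E={0,2}, F={0,1}: d1-a2=a3, d2-a0=2a3
        have e1 := spanA h3p h34 h2a3 (by linarith) (by linarith)
          (hE 2 (by decide))
        have e2 := spanB h3p h34 h2a3 (by linarith) (by linarith)
          (hF 0 (by decide))
        omega
      · -- E={0,2}, F={1,2}: d1-a2=a3, d2-a2=a3 : contradiction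
        have e1 := spanA h3p h34 h2a3 (by linarith) (by linarith)
          (hE 2 (by decide))
        have e2 := spanA h3p h34 h2a3 (by linarith) (by linarith)
          (hF 2 (by decide))
        omega
      · -- E={1,2}: d1-a1=a3, d1-a2=a3 : contradiction
        have e1 := spanA h3p h34 h2a3 (by linarith) (by linarith)
          (hE 1 (by decide))
        have e2 := spanA h3p h34 h2a3 (by linarith) (by linarith)
          (hE 2 (by decide))
        omega
      · have e1 := spanA h3p h34 h2a3 (by linarith) (by linarith)
          (hE 1 (by decide))
        have e2 := spanA h3p h34 h2a3 (by linarith) (by linarith)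
          (hE 2 (by decide))
        omega
  · rintro (h | h | ⟨h1, h2⟩ | ⟨h1, h2⟩)
    · -- d1 = 2a3 ∈ span, d2 - a1 = a4
      exact Or.inr (Or.inl ⟨⟨2, 0, by push_cast; omega⟩, 1, 0, 1, by push_cast; omega⟩)
    · -- d2 = 2a3 ∈ span, d1 - a0 = a4
      exact Or.inr (Or.inr (Or.inl ⟨⟨2, 0, by push_cast; omega⟩, 0, 0, 1, by push_cast; omega⟩))
    · -- E={0,1}, F={1,2}
      refine Or.inr (Or.inr (Or.inr ⟨{0,1}, {1,2}, by decide, by decide, by decide, ?_, ?_⟩))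
      · intro e he; fin_cases he
        · exact ⟨0, 1, by push_cast; omega⟩
        · exact ⟨1, 0, by push_cast; omega⟩
      · intro f hf; fin_cases hf
        · exact ⟨0, 1, by push_cast; omega⟩
        · exact ⟨1, 0, by push_cast; omega⟩
    · -- E={0,2}, F={0,1}
      refine Or.inr (Or.inr (Or.inr ⟨{0,2}, {0,1}, by decide, by decide, by decide, ?_, ?_⟩))
      · intro e he; fin_cases he
        · exact ⟨0, 1, by push_cast; omega⟩
        · exact ⟨1, 0, by push_cast; omega⟩
      · intro f hf; fin_cases hf
        · exact ⟨2, 0, by push_cast; omega⟩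
        · exact ⟨0, 1, by push_cast; omega⟩
end

section
/- Let a_0, a_1, a_2, a_3, a_4 be integers with 1 ≤ a_0 < a_1 < a_2 < a_3 < a_4 and a_4 < a_1 + a_3, and set d_1 = a_0 + a_4 and d_2 = a_2 + a_4. Then the following condition holds: [either d_1 ∈ ⟨a_3,a_4⟩ and d_2 ∈ ⟨a_3,a_4⟩; or d_1 ∈ ⟨a_3,a_4⟩ and d_2 − a_e ∈ ⟨a_3,a_4⟩ for some e ∈ {0,…,4}; or d_2 ∈ ⟨a_3,a_4⟩ and d_1 − a_e ∈ ⟨a_3,a_4⟩ for some e ∈ {0,…,4}; or there exist two-element subsets E, F of {0,1,2} with E ∪ F = {0,1,2}, d_1 − a_e ∈ ⟨a_3,a_4⟩ for all e ∈ E, and d_2 − a_f ∈ ⟨a_3,a_4⟩ for all f ∈ F] if and only if: a_4 = 2a_3 − a_0, or a_4 = 2a_3 − a_2, or (a_3 = a_2 − a_0 and a_4 = a_2 + a_1 − 2a_0), or (a_3 = a_2 + a_1 − 2a_0 and a_4 = a_2 + 2a_1 − 3a_0), or (a_3 = 2a_2 − a_1 − a_0 and a_4 = 3a_2 − a_1 −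 2a_0). -/
lemma mem_iff (b c x : ℤ) (hb : 0 < b) (hbc : b < c) (hc2 : c < 2*b) (hx : x < b + c) :
    InSpan2 b c x ↔ (x = 0 ∨ x = b ∨ x = c ∨ x = 2*b) := by
  constructor
  · rintro ⟨α, β, rfl⟩
    have hα0 : (0:ℤ) ≤ (α:ℤ) := Int.natCast_nonneg α
    have hβ0 : (0:ℤ) ≤ (β:ℤ) := Int.natCast_nonneg β
    have hβ : β ≤ 1 := by
      by_contra h
      have h2 : (2:ℤ) ≤ (β:ℤ) := by exact_mod_cast (by omega : 2 ≤ β)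
      have hc0 : (0:ℤ) ≤ c := le_of_lt (hb.trans hbc)
      have := mul_le_mul_of_nonneg_right h2 hc0
      have := mul_nonneg hα0 hb.le
      linarith
    have hα : α ≤ 2 := by
      by_contra h
      have h3 : (3:ℤ) ≤ (α:ℤ) := by exact_mod_cast (by omega : 3 ≤ α)
      have := mul_le_mul_of_nonneg_right h3 hb.le
      have := mul_nonneg hβ0 (le_of_lt (hb.trans hbc))
      linarith
    interval_cases α <;> interval_cases β <;> push_cast <;> omega
  · rintro (rfl | rfl | rfl | rfl)
    · exact ⟨0, 0, by norm_num⟩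
    · exact ⟨1, 0, by norm_num⟩
    · exact ⟨0, 1, by norm_num⟩
    · exact ⟨2, 0, by push_cast; ring⟩

lemma comb (E F : Finset (Fin 5)) (hE : E.card = 2) (hF : F.card = 2)
    (hU : E ∪ F = ({0,1,2} : Finset (Fin 5))) :
    (E = {0,1} ∧ F = {0,2}) ∨ (E = {0,1} ∧ F = {1,2}) ∨ (E = {0,2} ∧ F = {0,1}) ∨
    (E = {0,2} ∧ F = {1,2}) ∨ (E = {1,2} ∧ F = {0,1}) ∨ (E = {1,2} ∧ F = {0,2}) := by
  revert hE hF hU; revert F; revert E; decide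

theorem corollary2_case02 (a : Fin 5 → ℤ) (h0 : 1 ≤ a 0) (h01 : a 0 < a 1) (h12 : a 1 < a 2)
    (h23 : a 2 < a 3) (h34 : a 3 < a 4) (hdP : a 4 < a 1 + a 3) :
    QS34 a (a 0 + a 4) (a 2 + a 4) ↔
      (a 4 = 2 * a 3 - a 0 ∨
       a 4 = 2 * a 3 - a 2 ∨
       (a 3 = a 2 - a 0 ∧ a 4 = a 2 + a 1 - 2 * a 0) ∨
       (a 3 = a 2 + a 1 - 2 * a 0 ∧ a 4 = a 2 + 2 * a 1 - 3 * a 0) ∨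
       (a 3 = 2 * a 2 - a 1 - a 0 ∧ a 4 = 3 * a 2 - a 1 - 2 * a 0)) := by
  have hb : 0 < a 3 := by linarith
  have hbc : a 3 < a 4 := h34
  have hc2 : a 4 < 2 * a 3 := by linarith
  -- membership characterizations
  have m1 : InSpan2 (a 3) (a 4) (a 0 + a 4) ↔ a 4 = 2 * a 3 - a 0 := by
    rw [mem_iff _ _ _ hb hbc hc2 (by linarith)]; omega
  have m2 : InSpan2 (a 3) (a 4) (a 2 + a 4) ↔ a 4 = 2 * a 3 - a 2 := by
    rw [mem_iff _ _ _ hb hbc hc2 (by linarith)]; omega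
  have n11 : InSpan2 (a 3) (a 4) (a 0 + a 4 - a 1) ↔ a 4 = a 3 + a 1 - a 0 := by
    rw [mem_iff _ _ _ hb hbc hc2 (by linarith)]; omega
  have n12 : InSpan2 (a 3) (a 4) (a 0 + a 4 - a 2) ↔ a 4 = a 3 + a 2 - a 0 := by
    rw [mem_iff _ _ _ hb hbc hc2 (by linarith)]; omega
  have n20 : InSpan2 (a 3) (a 4) (a 2 + a 4 - a 0) ↔ a 4 = 2 * a 3 + a 0 - a 2 := by
    rw [mem_iff _ _ _ hb hbc hc2 (by linarith)]; omega
  have n21 : InSpan2 (a 3) (a 4) (a 2 + a 4 - a 1) ↔ a 4 = 2 * a 3 + a 1 - a 2 := by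
    rw [mem_iff _ _ _ hb hbc hc2 (by linarith)]; omega
  have triv1 : InSpan2 (a 3) (a 4) (a 0 + a 4 - a 0) := ⟨0, 1, by push_cast; ring⟩
  have triv2 : InSpan2 (a 3) (a 4) (a 2 + a 4 - a 2) := ⟨0, 1, by push_cast; ring⟩
  constructor
  · rintro (⟨h1, _⟩ | ⟨h1, _⟩ | ⟨h2, _⟩ | ⟨E, F, hEc, hFc, hU, hE, hF⟩)
    · exact Or.inl (m1.mp h1)
    · exact Or.inl (m1.mp h1)
    · exact Or.inr (Or.inl (m2.mp h2))
    · rcases comb E F hEc hFc hU with ⟨rfl, rfl⟩ | ⟨rfl, rfl⟩ | ⟨rfl, rfl⟩ |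
        ⟨rfl, rfl⟩ | ⟨rfl, rfl⟩ | ⟨rfl, rfl⟩
      · -- E={0,1}, F={0,2} : R ∧ Q0 ⇒ case 4
        have hR := n11.mp (hE 1 (by decide))
        have hQ0 := n20.mp (hF 0 (by decide))
        exact Or.inr (Or.inr (Or.inr (Or.inl ⟨by omega, by omega⟩)))
      · -- E={0,1}, F={1,2} : R ∧ Q1 ⇒ case 3
        have hR := n11.mp (hE 1 (by decide))
        have hQ1 := n21.mp (hF 1 (by decide))
        exact Or.inr (Or.inr (Or.inl ⟨by omega, by omega⟩))
      · -- E={0,2}, F={0,1} : Q0 ∧ Q1 ⇒ contradiction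
        have hQ0 := n20.mp (hF 0 (by decide))
        have hQ1 := n21.mp (hF 1 (by decide))
        exfalso; omega
      · -- E={0,2}, F={1,2} : P ∧ Q1 ⇒ case 5
        have hP := n12.mp (hE 2 (by decide))
        have hQ1 := n21.mp (hF 1 (by decide))
        exact Or.inr (Or.inr (Or.inr (Or.inr ⟨by omega, by omega⟩)))
      · -- E={1,2} : R ∧ P ⇒ contradiction
        have hR := n11.mp (hE 1 (by decide))
        have hP := n12.mp (hE 2 (by decide))
        exfalso; omega
      · have hR := n11.mp (hE 1 (by decide))
        have hP := n12.mp (hE 2 (by decide))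
        exfalso; omega
  · rintro (h | h | ⟨h1, h2⟩ | ⟨h1, h2⟩ | ⟨h1, h2⟩)
    · exact Or.inr (Or.inl ⟨m1.mpr h, 2, triv2⟩)
    · exact Or.inr (Or.inr (Or.inl ⟨m2.mpr h, 0, triv1⟩))
    · exfalso; omega
    · -- case 4: E={0,1}, F={0,2}
      refine Or.inr (Or.inr (Or.inr ⟨{0,1}, {0,2}, by decide, by decide, by decide, ?_, ?_⟩))
      · intro e he; fin_cases he
        · exact triv1
        · exact n11.mpr (by omega)
      · intro f hf; fin_cases hf
        · exact n20.mpr (by omega)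
        · exact triv2
    · -- case 5: E={0,2}, F={1,2}
      refine Or.inr (Or.inr (Or.inr ⟨{0,2}, {1,2}, by decide, by decide, by decide, ?_, ?_⟩))
      · intro e he; fin_cases he
        · exact triv1
        · exact n12.mpr (by omega)
      · intro f hf; fin_cases hf
        · exact n21.mpr (by omega)
        · exact triv2
end

section
/- Let a_0, a_1, a_2, a_3, a_4 be integers with 1 ≤ a_0 < a_1 < a_2 < a_3 < a_4 and a_4 < a_0 + a_3, and set d_1 = a_1 + a_4 and d_2 = a_2 + a_4. Then the following condition holds: [either d_1 ∈ ⟨a_3,a_4⟩ and d_2 ∈ ⟨a_3,a_4⟩; or d_1 ∈ ⟨a_3,a_4⟩ and d_2 − a_e ∈ ⟨a_3,a_4⟩ for some e ∈ {0,…,4}; or d_2 ∈ ⟨a_3,a_4⟩ and d_1 − a_e ∈ ⟨a_3,a_4⟩ for some e ∈ {0,…,4}; or there exist two-element subsets E, F of {0,1,2} with E ∪ F = {0,1,2}, d_1 − a_e ∈ ⟨a_3,a_4⟩ for all e ∈ E, and d_2 − a_f ∈ ⟨a_3,a_4⟩ for all f ∈ F] if and only if: a_4 = 2a_3 − a_1,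 or a_4 = 2a_3 − a_2, or (a_2 = 2a_1 − a_0 and a_4 = 2a_3 + a_0 − a_1), or (a_3 = 2a_2 − a_1 − a_0 and a_4 = 3a_2 − 2a_1 − a_0). -/
/-- Classification of small elements of `⟨b, c⟩` when `0 < b < c < 2b`. -/
lemma span_char (b c x : ℤ) (hb : 0 < b) (hbc : b < c) (hc2 : c < 2 * b)
    (hx : 0 < x) (hlt : x < b + c) (h : InSpan2 b c x) :
    x = b ∨ x = c ∨ x = 2 * b := by
  obtain ⟨α, β, rfl⟩ := h
  have hα0 : (0:ℤ) ≤ (α:ℤ) := Int.natCast_nonneg α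
  have hβ0 : (0:ℤ) ≤ (β:ℤ) := Int.natCast_nonneg β
  have hβ : β ≤ 1 := by
    by_contra hbe
    push_neg at hbe
    have h2 : (2:ℤ) ≤ (β:ℤ) := by exact_mod_cast hbe
    nlinarith
  have hα : α ≤ 2 := by
    by_contra hae
    push_neg at hae
    have h3 : (3:ℤ) ≤ (α:ℤ) := by exact_mod_cast hae
    nlinarith
  interval_cases α <;> interval_cases β <;> push_cast at hx hlt ⊢ <;> omega

lemma finset_cases (F : Finset (Fin 5)) (h2 : F.card = 2)
    (hs : F ⊆ ({0, 1, 2} : Finset (Fin 5))) :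
    F = {0, 1} ∨ F = {0, 2} ∨ F = {1, 2} := by
  revert h2 hs
  revert F
  decide

theorem corollary2_case12 (a : Fin 5 → ℤ) (h0 : 1 ≤ a 0) (h01 : a 0 < a 1) (h12 : a 1 < a 2)
    (h23 : a 2 < a 3) (h34 : a 3 < a 4) (hdP : a 4 < a 0 + a 3) :
    QS34 a (a 1 + a 4) (a 2 + a 4) ↔
      (a 4 = 2 * a 3 - a 1 ∨
       a 4 = 2 * a 3 - a 2 ∨
       (a 2 = 2 * a 1 - a 0 ∧ a 4 = 2 * a 3 + a 0 - a 1) ∨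
       (a 3 = 2 * a 2 - a 1 - a 0 ∧ a 4 = 3 * a 2 - 2 * a 1 - a 0)) := by
  have hb : 0 < a 3 := by omega
  have hc2 : a 4 < 2 * a 3 := by omega
  constructor
  · intro h
    rcases h with ⟨h1, _⟩ | ⟨h1, _⟩ | ⟨h2, _⟩ | ⟨E, F, hE, hF, hEF, hd1, hd2⟩
    · have := span_char (a 3) (a 4) (a 1 + a 4) hb h34 hc2 (by omega) (by omega) h1
      omega
    · have := span_char (a 3) (a 4) (a 1 + a 4) hb h34 hc2 (by omega) (by omega) h1
      omega
    · have := span_char (a 3) (a 4) (a 2 + a 4) hb h34 hc2 (by omega) (by omega) h2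
      omega
    · have hsub : F ⊆ ({0, 1, 2} : Finset (Fin 5)) := by
        rw [← hEF]; exact Finset.subset_union_right
      rcases finset_cases F hF hsub with rfl | rfl | rfl
      · have h := hd2 0 (by decide)
        have := span_char (a 3) (a 4) (a 2 + a 4 - a 0) hb h34 hc2 (by omega) (by omega) h
        omega
      · have h := hd2 0 (by decide)
        have := span_char (a 3) (a 4) (a 2 + a 4 - a 0) hb h34 hc2 (by omega) (by omega) h
        omega
      · have h := hd2 1 (by decide)
        have := span_char (a 3) (a 4) (a 2 + a 4 - a 1) hb h34 hc2 (by omega) (by omega) h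
        omega
  · intro h
    rcases h with h | h | ⟨h1, h2⟩ | ⟨h1, h2⟩
    · refine Or.inr (Or.inl ⟨⟨2, 0, by push_cast; omega⟩, 2, 0, 1, by push_cast; omega⟩)
    · refine Or.inr (Or.inr (Or.inl ⟨⟨2, 0, by push_cast; omega⟩, 1, 0, 1, by push_cast; omega⟩))
    · exfalso; omega
    · exfalso; omega
end

section
/- Let (a_0, a_1, a_2, a_3, a_4; d_1, d_2) be a del Pezzo WCI datum with a_0 = a_1 and d_1 = d_2 = a_0 + a_4. Then either a_4 < 15, or there exists an integer t ≥ 1 such that (a_0, a_1, a_2, a_3, a_4; d_1, d_2) = (1, 1, t, t, 2t−1; 2t, 2t), or there exists an odd integer t ≥ 1 such that (a_0, a_1, a_2, a_3, a_4; d_1, d_2) = (2, 2, t, t, 2t−2; 2t, 2t). -/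
/-! With `a₀ = a₁` and degree `d = a₀ + a₄`, quasi-smoothness at the vertex `P₃` (with the
well-formedness of `gcd(a₃, a₄)`) gives `a₃ ∣ d`, and the amplitude bound `a₄ < a₂ + a₃` pins
down `d = 2a₃`. Quasi-smoothness along the edge `P₂P₄` then gives `a₂ ∣ 2a₃`, so `2a₃` is
`2a₂` or `3a₂`. Quasi-smoothness at `P₀` makes `a₀` divide `2a₃`, `2a₃ - a₂` or `a₃`, and
`a₀` is coprime to `a₂` and `a₃`: if `a₂ = a₃` this forces `a₀ ∣ 2`, the two families; if
`2a₃ = 3a₂` it forces `a₀ ≤ 3`, and then the amplitude bound leaves `a₄ ≤ 14`. -/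

theorem InSpan2.dvd_of_lt {b e x : ℤ} (hb : 0 ≤ b) (he : 0 ≤ e) (hx : InSpan2 b e x)
    (hlt : x < e) : b ∣ x := by
  obtain ⟨p, q, rfl⟩ := hx
  rcases q with _ | q
  · simp
  · push_cast at hlt
    nlinarith [mul_nonneg (Int.natCast_nonneg p) hb, mul_nonneg (Int.natCast_nonneg q) he]

theorem InSpan2.dvd_or_dvd_sub_of_lt_two_mul {b e x : ℤ} (hb : 0 ≤ b) (he : 0 ≤ e)
    (hx : InSpan2 b e x) (hlt : x < 2 * e) : b ∣ x ∨ b ∣ x - e := by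
  obtain ⟨p, q, rfl⟩ := hx
  rcases q with _ | _ | q
  · simp
  · simp
  · push_cast at hlt
    nlinarith [mul_nonneg (Int.natCast_nonneg p) hb, mul_nonneg (Int.natCast_nonneg q) he]

theorem Int.eq_mul_of_dvd_of_lt_of_lt {c d m : ℤ} (hc : 0 < c) (hdvd : c ∣ d)
    (hlo : (m - 1) * c < d) (hhi : d < (m + 1) * c) : d = m * c := by
  obtain ⟨k, rfl⟩ := hdvd
  have h1 : m - 1 < k := lt_of_mul_lt_mul_right (by linarith) hc.le
  have h2 : k < m + 1 := lt_of_mul_lt_mul_right (by linarith) hc.le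
  rw [show k = m by omega, mul_comm]

theorem eq_and_eq_one_or_eq_two_of_dvd {a b c : ℤ} (ha : 0 < a) (hab : a ≤ b) (hbc : b ≤ c)
    (hamp : 2 * c - a < b + c) (h15 : 15 ≤ 2 * c - a) (hb : b ∣ 2 * c)
    (hac_cop : IsCoprime a c) (hab_cop : IsCoprime a b) (ha_dvd : a ∣ 2 * c ∨ a ∣ 2 * c - b ∨ a ∣ c) :
    b = c ∧ (a = 1 ∨ a = 2 ∧ Odd b) := by
  rcases eq_or_lt_of_le hbc with rfl | hbc
  · have ha2 : a ∣ 2 := by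
      refine hab_cop.dvd_of_dvd_mul_right ?_
      rcases ha_dvd with h | h | h
      · exact h
      · exact (by simpa [two_mul] using h : a ∣ b).mul_left 2
      · exact h.mul_left 2
    have := Int.le_of_dvd two_pos ha2
    refine ⟨rfl, ?_⟩
    rcases (show a = 1 ∨ a = 2 by omega) with rfl | rfl
    · exact Or.inl rfl
    · refine Or.inr ⟨rfl, Int.not_even_iff_odd.mp fun heven => ?_⟩
      have := hab_cop.isUnit_of_dvd' dvd_rfl (even_iff_two_dvd.mp heven)
      simp [Int.isUnit_iff] at this
  · exfalso
    have h3b : 2 * c = 3 * b := by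
      simpa using Int.eq_mul_of_dvd_of_lt_of_lt (m := 3) (by omega) hb (by linarith) (by linarith)
    have ha3 : a ≤ 3 := by
      rcases ha_dvd with h | h | h
      · exact Int.le_of_dvd three_pos (hab_cop.dvd_of_dvd_mul_right (h3b ▸ h))
      · have : a ∣ 2 * b := by rwa [show 2 * c - b = 2 * b by omega] at h
        have := Int.le_of_dvd two_pos (hab_cop.dvd_of_dvd_mul_right this)
        omega
      · have := Int.le_of_dvd one_pos ((hac_cop.isUnit_of_dvd' dvd_rfl h).dvd)
        omega
    omega

namespace IsDelPezzoWCI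

variable {a : Fin 5 → ℤ} {d₁ d₂ : ℤ}

theorem dvd_one_of_forall_ne (h : IsDelPezzoWCI a d₁ d₂) (i : Fin 5) {z : ℤ}
    (hz : ∀ j, j ≠ i → z ∣ a j) : z ∣ 1 := by
  rw [← h.wf3 i]
  exact Finset.dvd_gcd fun j hj => hz j (by simpa using hj)

theorem dvd_or_dvd_of_forall_notMem (h : IsDelPezzoWCI a d₁ d₂) {s : Finset (Fin 5)}
    (hs : s.card = 3) {z : ℤ} (hz : ∀ j, j ∉ s → z ∣ a j) : z ∣ d₁ ∨ z ∣ d₂ := by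
  have hgcd : z ∣ sᶜ.gcd a := Finset.dvd_gcd fun j hj => hz j (Finset.mem_compl.mp hj)
  exact (h.wf1 s hs).imp hgcd.trans hgcd.trans

theorem a4_lt_a2_add_a3 (h : IsDelPezzoWCI a (a 0 + a 4) (a 0 + a 4)) (h01 : a 0 = a 1) :
    a 4 < a 2 + a 3 := by
  have := h.amp
  omega

theorem a3_dvd_degree (h : IsDelPezzoWCI a (a 0 + a 4) (a 0 + a 4)) (h01 : a 0 = a 1) :
    a 3 ∣ a 0 + a 4 := by
  have h02 := h.mono 0 2 (by decide)
  have h23 := h.mono 2 3 (by decide)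
  rcases eq_or_lt_of_le (h02.trans h23) with h03 | h03
  · have h1 : a 3 ∣ 1 := h.dvd_one_of_forall_ne 4 fun j hj => by
      have h22 : a 2 = a 3 := by omega
      fin_cases j <;> simp_all
    exact h1.trans (one_dvd _)
  have of_dvd_a4 : a 3 ∣ a 4 → a 3 ∣ a 0 + a 4 := fun h34 =>
    (h.dvd_or_dvd_of_forall_notMem (s := {0, 1, 2}) rfl fun j hj => by
      fin_cases j <;> simp_all).elim id id
  have of_index : ∀ j, j ≠ 2 → j ≠ 4 → a 3 ∣ a 0 + a 4 - a j → a 3 ∣ a 0 + a 4 := by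
    intro j h2 h4 hj
    fin_cases j
    · exact of_dvd_a4 (by simpa using hj)
    · exact of_dvd_a4 (by simpa [← h01] using hj)
    · contradiction
    · simpa using dvd_add hj (dvd_refl (a 3))
    · contradiction
  have not_dvd : ¬ a 3 ∣ a 0 + a 4 - a 4 := fun hd =>
    (Int.le_of_dvd (h.a_pos 0) (by simpa using hd)).not_gt h03
  -- of two distinct indices one avoids both 2 and 4, since index 4 would give `a 3 ∣ a 0`
  rcases h.qs1 3 with h3 | h3 | ⟨e, f, hef, he, hf⟩
  · exact h3
  · exact h3
  · by_cases he2 : e = 2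
    · exact of_index f (fun hf2 => hef (he2.trans hf2.symm)) (by rintro rfl; exact not_dvd hf) hf
    · exact of_index e he2 (by rintro rfl; exact not_dvd he) he

theorem degree_eq_two_mul_a3 (h : IsDelPezzoWCI a (a 0 + a 4) (a 0 + a 4)) (h01 : a 0 = a 1) :
    a 0 + a 4 = 2 * a 3 := by
  have := h.a4_lt_a2_add_a3 h01
  have := h.a_pos 0
  have := h.mono 0 2 (by decide)
  have := h.mono 2 3 (by decide)
  have := h.mono 3 4 (by decide)
  exact Int.eq_mul_of_dvd_of_lt_of_lt (h.a_pos 3) (h.a3_dvd_degree h01) (by linarith) (by linarith)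

theorem a0_dvd_degree_sub (h : IsDelPezzoWCI a (a 0 + a 4) (a 0 + a 4)) (h01 : a 0 = a 1) :
    a 0 ∣ 2 * a 3 ∨ a 0 ∣ 2 * a 3 - a 2 ∨ a 0 ∣ a 3 := by
  have hD := h.degree_eq_two_mul_a3 h01
  have of_index : ∀ j, j ≠ 4 → a 0 ∣ a 0 + a 4 - a j →
      a 0 ∣ 2 * a 3 ∨ a 0 ∣ 2 * a 3 - a 2 ∨ a 0 ∣ a 3 := by
    intro j h4 hj
    rw [hD] at hj
    fin_cases j
    · exact Or.inl (by simpa using dvd_add hj (dvd_refl (a 0)))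
    · exact Or.inl (by simpa [← h01] using dvd_add hj (dvd_refl (a 0)))
    · exact Or.inr (Or.inl hj)
    · exact Or.inr (Or.inr (by simpa [two_mul] using hj))
    · contradiction
  rcases h.qs1 0 with h0 | h0 | ⟨e, f, hef, he, hf⟩
  · exact Or.inl (hD ▸ h0)
  · exact Or.inl (hD ▸ h0)
  · by_cases he4 : e = 4
    · exact of_index f (fun hf4 => hef (he4.trans hf4.symm)) hf
    · exact of_index e he4 he

theorem a2_dvd_two_mul_a3 (h : IsDelPezzoWCI a (a 0 + a 4) (a 0 + a 4)) (h01 : a 0 = a 1) :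
    a 2 ∣ 2 * a 3 := by
  have hD := h.degree_eq_two_mul_a3 h01
  have h02 := h.mono 0 2 (by decide)
  rcases eq_or_lt_of_le (h.mono 2 3 (by decide)) with h23 | h23
  · exact h23 ▸ dvd_mul_left _ _
  have hb := (h.a_pos 2).le
  have he := (h.a_pos 4).le
  have hspan : InSpan2 (a 2) (a 4) (2 * a 3) ∨ InSpan2 (a 2) (a 4) (a 3) := by
    rcases h.qs2 2 4 (by decide) with ⟨h1, -⟩ | ⟨h1, -⟩ | ⟨h1, -⟩ | ⟨E, F, -, -, hEF, hE, hF⟩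
    · exact Or.inl (hD ▸ h1)
    · exact Or.inl (hD ▸ h1)
    · exact Or.inl (hD ▸ h1)
    · have h3 : (3 : Fin 5) ∈ E ∪ F := by rw [hEF]; decide
      have hsub : a 0 + a 4 - a 3 = a 3 := by omega
      rcases Finset.mem_union.mp h3 with h3 | h3
      · exact Or.inr (hsub ▸ hE 3 h3)
      · exact Or.inr (hsub ▸ hF 3 h3)
  rcases hspan with hspan | hspan
  · rcases hspan.dvd_or_dvd_sub_of_lt_two_mul hb he (by omega) with hdvd | hdvd
    · exact hdvd
    · rw [show 2 * a 3 - a 4 = a 0 by omega] at hdvd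
      have h20 : a 2 = a 0 := le_antisymm (Int.le_of_dvd (h.a_pos 0) hdvd) h02
      rw [h20]
      rcases h.a0_dvd_degree_sub h01 with h0 | h0 | h0
      · exact h0
      · simpa [h20] using dvd_add h0 (dvd_refl (a 0))
      · exact h0.mul_left 2
  · exact (hspan.dvd_of_lt hb he (by omega)).mul_left 2

theorem isCoprime_a0_a3 (h : IsDelPezzoWCI a (a 0 + a 4) (a 0 + a 4)) (h01 : a 0 = a 1) :
    IsCoprime (a 0) (a 3) := by
  have hD := h.degree_eq_two_mul_a3 h01
  refine isRelPrime_iff_isCoprime.mp fun z hz0 hz3 =>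
    isUnit_of_dvd_one (h.dvd_one_of_forall_ne 2 fun j hj => ?_)
  have hz4 : z ∣ a 4 := by
    rw [show a 4 = 2 * a 3 - a 0 by omega]
    exact dvd_sub (hz3.mul_left 2) hz0
  fin_cases j <;> simp_all

theorem isCoprime_a0_a2 (h : IsDelPezzoWCI a (a 0 + a 4) (a 0 + a 4)) (h01 : a 0 = a 1) :
    IsCoprime (a 0) (a 2) := by
  have hD := h.degree_eq_two_mul_a3 h01
  have h23 := h.a2_dvd_two_mul_a3 h01
  refine isRelPrime_iff_isCoprime.mp fun z hz0 hz2 =>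
    isUnit_of_dvd_one (h.dvd_one_of_forall_ne 3 fun j hj => ?_)
  have hz4 : z ∣ a 4 := by
    rw [show a 4 = 2 * a 3 - a 0 by omega]
    exact dvd_sub (hz2.trans h23) hz0
  fin_cases j <;> simp_all

end IsDelPezzoWCI

theorem lemma4_case01_subcase01 (a : Fin 5 → ℤ) (d₁ d₂ : ℤ) (h : IsDelPezzoWCI a d₁ d₂)
    (h01 : a 0 = a 1) (hd₁ : d₁ = a 0 + a 4) (hd₂ : d₂ = a 0 + a 4) :
    a 4 < 15 ∨
    (∃ t : ℤ, 1 ≤ t ∧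
      a 0 = 1 ∧ a 1 = 1 ∧ a 2 = t ∧ a 3 = t ∧ a 4 = 2 * t - 1 ∧ d₁ = 2 * t ∧ d₂ = 2 * t) ∨
    (∃ t : ℤ, 1 ≤ t ∧ Odd t ∧
      a 0 = 2 ∧ a 1 = 2 ∧ a 2 = t ∧ a 3 = t ∧ a 4 = 2 * t - 2 ∧ d₁ = 2 * t ∧ d₂ = 2 * t) := by
  subst hd₁ hd₂
  refine (lt_or_ge (a 4) 15).imp_right fun h15 => ?_
  have hD := h.degree_eq_two_mul_a3 h01
  have hamp := h.a4_lt_a2_add_a3 h01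
  obtain ⟨h23, h0⟩ := eq_and_eq_one_or_eq_two_of_dvd (h.a_pos 0) (h.mono 0 2 (by decide))
    (h.mono 2 3 (by decide)) (by omega) (by omega) (h.a2_dvd_two_mul_a3 h01)
    (h.isCoprime_a0_a3 h01) (h.isCoprime_a0_a2 h01) (h.a0_dvd_degree_sub h01)
  have h2 := h.a_pos 2
  rcases h0 with h0 | ⟨h0, hodd⟩
  · exact Or.inl ⟨a 2, h2, h0, h01 ▸ h0, rfl, h23.symm, by omega, by omega, by omega⟩
  · exact Or.inr ⟨a 2, h2, hodd, h0, h01 ▸ h0, rfl, h23.symm, by omega, by omega, by omega⟩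
end

section
/- Let (a_0, a_1, a_2, a_3, a_4; d_1, d_2) be a del Pezzo WCI datum with a_0 < a_1 < a_2 = a_3 < a_4, d_1 = a_0 + a_4 and d_2 = a_1 + a_4. Then there exists an integer t ≥ 1 such that (a_0, a_1, a_2, a_3, a_4; d_1, d_2) equals one of: (2, 4, 2t+1, 2t+1, 4t; 4t+2, 4t+4); (1, 2, t, t, 2t−1; 2t, 2t+1) with t odd; (3, t, 2t−3, 2t−3, 3t−6; 3t−3, 4t−6) with t not divisible by 3; (1, t, 2t−1, 2t−1, 3t−2; 3t−1, 4t−2). -/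
/-! The amplitude is `I = 2 a₂ - a₄ ≥ 1`, so all the degrees `d₁`, `d₂`, `dᵢ - aₑ` that
quasi-smoothness tests along the edge `P(a₂, a₃)` lie in `(0, 3 a₂)`, where the only multiples of
`a₂` are `a₂` and `2 a₂`. This leaves two branches: `a₁ = 2 a₀, d₁ = 2 a₂`, or `d₂ = 2 a₂,
d₁ = a₁ + a₂`. In the first, quasi-smoothness along `P(a₀, a₁)` gives `a₀ ∣ 2 a₂` and
well-formedness makes `a₂` odd and prime to `a₀`. In the second, every weight is a combination of
`a₀` and `a₁`, so they are coprime; QS1 at `a₀` then gives `a₀ ∣ k a₁` for some `k ≤ 4`, and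
well-formedness makes `a₀` odd, so `a₀ ∈ {1, 3}`. -/

namespace InSpan2

lemma dvd {b c x k : ℤ} (hb : k ∣ b) (hc : k ∣ c) (h : InSpan2 b c x) : k ∣ x := by
  obtain ⟨α, β, rfl⟩ := h
  exact dvd_add (hb.mul_left _) (hc.mul_left _)

lemma eq_or_eq_two_mul_of_self {c x : ℤ} (h : InSpan2 c c x) (hx : 0 < x) (hx3 : x < 3 * c) :
    x = c ∨ x = 2 * c := by
  obtain ⟨α, β, rfl⟩ := h
  have hc : 0 < c := by nlinarith
  have hlt : (α : ℤ) + β < 3 := by nlinarith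
  have hpos : 0 < (α : ℤ) + β := by nlinarith
  obtain hn | hn : (α : ℤ) + β = 1 ∨ (α : ℤ) + β = 2 := by omega
  · left; linear_combination c * hn
  · right; linear_combination c * hn

end InSpan2

lemma apply_eq_of_apply_two_eq_three {α : Type*} (a : Fin 5 → α) (h23 : a 2 = a 3) (e : Fin 5) :
    a e = a 0 ∨ a e = a 1 ∨ a e = a 2 ∨ a e = a 4 := by
  fin_cases e <;> simp [h23]

namespace IsDelPezzoWCI

variable {a : Fin 5 → ℤ} {d₁ d₂ : ℤ}

lemma isUnit_of_forall_ne_dvd (h : IsDelPezzoWCI a d₁ d₂) (j : Fin 5) {k : ℤ}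
    (hk : ∀ i, i ≠ j → k ∣ a i) : IsUnit k :=
  isUnit_of_dvd_one <| h.wf3 j ▸ Finset.dvd_gcd fun i hi => hk i (by simpa using hi)

lemma dvd_of_forall_notMem_dvd (h : IsDelPezzoWCI a d₁ d₂) {s : Finset (Fin 5)} (hs : s.card = 2)
    {k : ℤ} (hk : ∀ i ∉ s, k ∣ a i) : k ∣ d₁ ∧ k ∣ d₂ :=
  have hg : k ∣ sᶜ.gcd a := Finset.dvd_gcd fun i hi => hk i (Finset.mem_compl.mp hi)
  ⟨hg.trans (h.wf2 s hs).1, hg.trans (h.wf2 s hs).2⟩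

lemma inSpan2_of_ne (h : IsDelPezzoWCI a d₁ d₂) {i j m : Fin 5} (hij : i ≠ j) (hmi : m ≠ i)
    (hmj : m ≠ j) :
    InSpan2 (a i) (a j) d₁ ∨ InSpan2 (a i) (a j) d₂ ∨
      InSpan2 (a i) (a j) (d₁ - a m) ∨ InSpan2 (a i) (a j) (d₂ - a m) := by
  rcases h.qs2 i j hij with ⟨h₁, -⟩ | ⟨h₁, -⟩ | ⟨h₂, -⟩ | ⟨E, F, -, -, hEF, hE, hF⟩
  · exact Or.inl h₁
  · exact Or.inl h₁
  · exact Or.inr (Or.inl h₂)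
  · have hm : m ∈ E ∪ F := by simp [hEF, hmi, hmj]
    rcases Finset.mem_union.mp hm with hm | hm
    · exact Or.inr (Or.inr (Or.inl (hE m hm)))
    · exact Or.inr (Or.inr (Or.inr (hF m hm)))

lemma case23_dichotomy (h : IsDelPezzoWCI a d₁ d₂)
    (h01 : a 0 < a 1) (h12 : a 1 < a 2) (h23 : a 2 = a 3) (h34 : a 3 < a 4)
    (hd₁ : d₁ = a 0 + a 4) (hd₂ : d₂ = a 1 + a 4) :
    (a 1 = 2 * a 0 ∧ a 0 + a 4 = 2 * a 2) ∨ (a 0 + a 4 = a 1 + a 2 ∧ a 1 + a 4 = 2 * a 2) := by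
  have h0 := h.a_pos 0
  have hamp := h.amp
  have hedge : ∀ x, InSpan2 (a 2) (a 3) x → 0 < x → x < 3 * a 2 → x = a 2 ∨ x = 2 * a 2 :=
    fun x hx => (h23.symm ▸ hx : InSpan2 (a 2) (a 2) x).eq_or_eq_two_mul_of_self
  rcases h.qs2 2 3 (by decide) with ⟨s₁, s₂⟩ | ⟨s₁, e, s₂⟩ | ⟨s₂, e, s₁⟩ |
    ⟨E, F, hE, -, hEF, hEs, -⟩
  · have := hedge _ s₁ (by omega) (by omega)
    have := hedge _ s₂ (by omega) (by omega)
    omega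
  · have := apply_eq_of_apply_two_eq_three a h23 e
    have := hedge _ s₁ (by omega) (by omega)
    have := hedge _ s₂ (by omega) (by omega)
    omega
  · have := apply_eq_of_apply_two_eq_three a h23 e
    have := hedge _ s₁ (by omega) (by omega)
    have := hedge _ s₂ (by omega) (by omega)
    omega
  · have h04 : ∀ E F : Finset (Fin 5), E.card = 2 → E ∪ F = ({2, 3} : Finset (Fin 5))ᶜ →
        0 ∈ E ∨ 4 ∈ E := by decide
    rcases h04 E F hE hEF with he | he
    · have := hedge _ (hEs _ he) (by omega) (by omega)
      omega
    · have := hedge _ (hEs _ he) (by omega) (by omega)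
      omega

lemma case23_of_a1_eq_two_mul (h : IsDelPezzoWCI a d₁ d₂) (h12 : a 1 < a 2) (h23 : a 2 = a 3)
    (hd₁ : d₁ = a 0 + a 4) (hd₂ : d₂ = a 1 + a 4) (h1 : a 1 = 2 * a 0)
    (h4 : a 0 + a 4 = 2 * a 2) :
    ∃ t : ℤ, 1 ≤ t ∧
      ((a 0 = 2 ∧ a 1 = 4 ∧ a 2 = 2 * t + 1 ∧ a 3 = 2 * t + 1 ∧ a 4 = 4 * t ∧
        d₁ = 4 * t + 2 ∧ d₂ = 4 * t + 4) ∨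
       (Odd t ∧ a 0 = 1 ∧ a 1 = 2 ∧ a 2 = t ∧ a 3 = t ∧ a 4 = 2 * t - 1 ∧
        d₁ = 2 * t ∧ d₂ = 2 * t + 1)) := by
  have h0 := h.a_pos 0
  have hrel : IsRelPrime (a 0) (a 2) := fun k hk0 hk2 =>
    h.isUnit_of_forall_ne_dvd 4 fun i hi => by
      fin_cases i
      · exact hk0
      · exact h1 ▸ hk0.mul_left 2
      · exact hk2
      · exact h23 ▸ hk2
      · exact absurd rfl hi
  have hdvd : a 0 ∣ 2 * a 2 := by
    have hspan : ∀ x, InSpan2 (a 0) (a 1) x → a 0 ∣ x :=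
      fun x => InSpan2.dvd dvd_rfl (h1 ▸ dvd_mul_left _ _)
    rcases h.inSpan2_of_ne (m := 2) (by decide : (0 : Fin 5) ≠ 1) (by decide) (by decide)
      with s | s | s | s <;> have hs := hspan _ s
    · rwa [hd₁, h4] at hs
    · rwa [show d₂ = 2 * a 2 + a 0 by omega, dvd_add_self_right] at hs
    · rw [show d₁ - a 2 = a 2 by omega] at hs
      exact hs.mul_left 2
    · rw [show d₂ - a 2 = a 2 + a 0 by omega, dvd_add_self_right] at hs
      exact hs.mul_left 2
  have hodd : ¬ 2 ∣ a 2 := fun h2 => by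
    have hd := h.dvd_of_forall_notMem_dvd (s := {0, 4}) (by decide) (k := 2) fun i hi => by
      fin_cases i <;> simp at hi ⊢ <;> omega
    have h20 : 2 ∣ a 0 := by omega
    exact Int.prime_two.not_isUnit <| h.isUnit_of_forall_ne_dvd 4 fun i hi => by
      fin_cases i <;> simp at hi ⊢ <;> omega
  have h2 := Int.le_of_dvd two_pos (hrel.isCoprime.dvd_of_dvd_mul_right hdvd)
  rcases show a 0 = 1 ∨ a 0 = 2 by omega with ha0 | ha0
  · exact ⟨a 2, by omega, Or.inr ⟨Int.odd_iff.mpr (by omega), ha0, by omega, rfl, h23.symm,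
      by omega, by omega, by omega⟩⟩
  · exact ⟨a 2 / 2, by omega, Or.inl ⟨ha0, by omega, by omega, by omega, by omega, by omega,
      by omega⟩⟩

lemma case23_of_a0_add_a4_eq (h : IsDelPezzoWCI a d₁ d₂) (h01 : a 0 < a 1) (h23 : a 2 = a 3)
    (hd₁ : d₁ = a 0 + a 4) (hd₂ : d₂ = a 1 + a 4) (h2 : a 0 + a 4 = a 1 + a 2)
    (h4 : a 1 + a 4 = 2 * a 2) :
    ∃ t : ℤ, 1 ≤ t ∧
      ((¬ (3 ∣ t) ∧ a 0 = 3 ∧ a 1 = t ∧ a 2 = 2 * t - 3 ∧ a 3 = 2 * t - 3 ∧ a 4 = 3 * t - 6 ∧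
        d₁ = 3 * t - 3 ∧ d₂ = 4 * t - 6) ∨
       (a 0 = 1 ∧ a 1 = t ∧ a 2 = 2 * t - 1 ∧ a 3 = 2 * t - 1 ∧ a 4 = 3 * t - 2 ∧
        d₁ = 3 * t - 1 ∧ d₂ = 4 * t - 2)) := by
  have h0 := h.a_pos 0
  have hrel : IsRelPrime (a 0) (a 1) := fun k hk0 hk1 =>
    h.isUnit_of_forall_ne_dvd 1 fun i hi => by
      fin_cases i
      · exact hk0
      · exact absurd rfl hi
      · exact (show a 2 = 2 * a 1 - a 0 by omega) ▸ dvd_sub (hk1.mul_left 2) hk0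
      · exact (show a 3 = 2 * a 1 - a 0 by omega) ▸ dvd_sub (hk1.mul_left 2) hk0
      · exact (show a 4 = 3 * a 1 - 2 * a 0 by omega) ▸ dvd_sub (hk1.mul_left 3) (hk0.mul_left 2)
  have hodd : ¬ 2 ∣ a 0 := fun h20 => by
    have hd := h.dvd_of_forall_notMem_dvd (s := {1, 4}) (by decide) (k := 2) fun i hi => by
      fin_cases i <;> simp at hi ⊢ <;> omega
    exact Int.prime_two.not_isUnit (hrel h20 (by omega))
  have hk : ∃ k : ℤ, 1 ≤ k ∧ k ≤ 4 ∧ a 0 ∣ k * a 1 := by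
    have hred (k m x : ℤ) (hx : a 0 ∣ x) (hxk : x = k * a 1 - m * a 0) : a 0 ∣ k * a 1 :=
      (dvd_sub_left (dvd_mul_left _ m)).mp (hxk ▸ hx)
    rcases h.qs1 0 with hq | hq | ⟨-, f, -, -, hq⟩
    · exact ⟨3, by norm_num, by norm_num, hred 3 1 _ hq (by omega)⟩
    · exact ⟨4, by norm_num, by norm_num, hred 4 2 _ hq (by omega)⟩
    · rcases apply_eq_of_apply_two_eq_three a h23 f with hf | hf | hf | hf <;> rw [hf] at hq
      · exact ⟨4, by norm_num, by norm_num, hred 4 3 _ hq (by omega)⟩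
      · exact ⟨3, by norm_num, by norm_num, hred 3 2 _ hq (by omega)⟩
      · exact ⟨2, by norm_num, by norm_num, hred 2 1 _ hq (by omega)⟩
      · exact ⟨1, by norm_num, by norm_num, hred 1 0 _ hq (by omega)⟩
  obtain ⟨k, hk1, hk4, hdk⟩ := hk
  have hle := Int.le_of_dvd (by omega) (hrel.isCoprime.dvd_of_dvd_mul_right hdk)
  rcases show a 0 = 1 ∨ a 0 = 3 by omega with ha0 | ha0
  · exact ⟨a 1, by omega, Or.inr ⟨ha0, rfl, by omega, by omega, by omega, by omega, by omega⟩⟩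
  · refine ⟨a 1, by omega, Or.inl ⟨fun h3 => ?_, ha0, rfl, by omega, by omega, by omega, by omega,
      by omega⟩⟩
    exact Int.prime_three.not_isUnit (hrel (ha0 ▸ dvd_rfl) h3)

end IsDelPezzoWCI

theorem lemma4_case23_subcase01 (a : Fin 5 → ℤ) (d₁ d₂ : ℤ) (h : IsDelPezzoWCI a d₁ d₂)
    (h01 : a 0 < a 1) (h12 : a 1 < a 2) (h23 : a 2 = a 3) (h34 : a 3 < a 4)
    (hd₁ : d₁ = a 0 + a 4) (hd₂ : d₂ = a 1 + a 4) :
    ∃ t : ℤ, 1 ≤ t ∧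
      ((a 0 = 2 ∧ a 1 = 4 ∧ a 2 = 2 * t + 1 ∧ a 3 = 2 * t + 1 ∧ a 4 = 4 * t ∧
        d₁ = 4 * t + 2 ∧ d₂ = 4 * t + 4) ∨
       (Odd t ∧ a 0 = 1 ∧ a 1 = 2 ∧ a 2 = t ∧ a 3 = t ∧ a 4 = 2 * t - 1 ∧
        d₁ = 2 * t ∧ d₂ = 2 * t + 1) ∨
       (¬ (3 ∣ t) ∧ a 0 = 3 ∧ a 1 = t ∧ a 2 = 2 * t - 3 ∧ a 3 = 2 * t - 3 ∧ a 4 = 3 * t - 6 ∧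
        d₁ = 3 * t - 3 ∧ d₂ = 4 * t - 6) ∨
       (a 0 = 1 ∧ a 1 = t ∧ a 2 = 2 * t - 1 ∧ a 3 = 2 * t - 1 ∧ a 4 = 3 * t - 2 ∧
        d₁ = 3 * t - 1 ∧ d₂ = 4 * t - 2)) := by
  rcases h.case23_dichotomy h01 h12 h23 h34 hd₁ hd₂ with ⟨h1, h4⟩ | ⟨h2, h4⟩
  · obtain ⟨t, ht, hF | hF⟩ := h.case23_of_a1_eq_two_mul h12 h23 hd₁ hd₂ h1 h4
    · exact ⟨t, ht, Or.inl hF⟩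
    · exact ⟨t, ht, Or.inr (Or.inl hF)⟩
  · obtain ⟨t, ht, hF | hF⟩ := h.case23_of_a0_add_a4_eq h01 h23 hd₁ hd₂ h2 h4
    · exact ⟨t, ht, Or.inr (Or.inr (Or.inl hF))⟩
    · exact ⟨t, ht, Or.inr (Or.inr (Or.inr hF))⟩
end

section
/- Let (a_0, a_1, a_2, a_3, a_4; d_1, d_2) be a del Pezzo WCI datum with pairwise distinct weights (a_0 < a_1 < a_2 < a_3 < a_4) such that d_1 = a_0 + a_4, d_2 = a_1 + a_4, a_4 = 2a_3 − a_1 and 2a_3 = 2a_2 + a_1 − a_0. Then one of the following holds for some positive integer ν: (i) there are odd coprime positive integers b_0 < b_1 with a_0 = 2b_0, a_1 = 2b_1, ν even, a_2 = (νb_0 − 1)b_1, a_3 = (νb_1 − 1)b_0, a_4 = 2(νb_0b_1 − b_0 − b_1); (ii) a_0, a_1 are odd and coprime, ν is odd, a_2 = ((νa_0 − 1)/2)a_1, a_3 = ((νa_1 − 1)/2)a_0, a_4 = νa_0a_1 − a_0 − a_1; (iii) a_0, a_1 are odd and coprime, a_2 = (νa_0 − 1)a_1, a_3 = νa_0a_1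 − (a_0 + a_1)/2, a_4 = 2νa_0a_1 − a_0 − 2a_1; (iv) a_0, a_1 are odd and coprime, a_2 = (νa_0 − 1)a_1 + (a_1 − a_0)/2, a_3 = a_0(νa_1 − 1), a_4 = 2νa_0a_1 − 2a_0 − a_1; (v) a_0, a_1 are odd and coprime, ν is odd, a_2 = ((νa_1 − 1)/2)a_0 − a_1, a_3 = ((νa_0 − 1)/2)a_1 − a_0, a_4 = νa_0a_1 − 2(a_0 + a_1). -/
/-!
Since `d₁ = 2a₂` and `d₂ = 2a₃`, quasi-smoothness at the strata spanned by `(a₁, a₃, a₄)` and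
`(a₀, a₂, a₄)` expresses `2a₂` or `a₂`, resp. `2a₃` or `a₃`, through those weights, and the size
of the weights leaves only `a₁ ∣ 2a₂` or `a₁ ∣ 2a₂ - a₃`, and `a₀ ∣ a₁`, `a₀ ∣ 2a₃` or
`a₀ ∣ 2a₃ - a₂`. Well-formedness makes `gcd(a₀, a₁)` divide `2`. If `a₀ = 2b₀` and `a₁ = 2b₁` are
even, then `b₀b₁ ∣ a₂ + b₁`, which is series (i). Otherwise `a₀, a₁` are odd and coprime, and each
of the four combinations of divisibilities makes `a₀a₁` divide one of `2a₂ + a₁`, `a₂ + a₁`,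
`2a₂ + a₁ + a₀`, `2(a₂ + a₁) + a₀`; the quotient is the parameter `ν` of series (ii), (iii), (v),
and `2ν` for series (iv).
-/

lemma Odd.of_dvd_int {x y : ℤ} (hy : Odd y) (hxy : x ∣ y) : Odd x :=
  Int.not_even_iff_odd.mp (mt hxy.even (Int.not_even_iff_odd.mpr hy))

lemma InSpan2.exists_dvd_sub {b c x : ℤ} {k : ℕ} (hb : 0 ≤ b) (hc : 0 < c) (hx : InSpan2 b c x)
    (hxk : x < k * c) : ∃ j < k, b ∣ x - j * c := by
  obtain ⟨α, β, rfl⟩ := hx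
  have hβ : (β : ℤ) * c < k * c := by nlinarith [mul_nonneg (Int.natCast_nonneg α) hb]
  exact ⟨β, by exact_mod_cast lt_of_mul_lt_mul_right hβ hc.le, α, by ring⟩

lemma InSpan3.exists_inSpan2_sub {b c d x : ℤ} {k : ℕ} (hb : 0 ≤ b) (hc : 0 ≤ c) (hd : 0 < d)
    (hx : InSpan3 b c d x) (hxk : x < k * d) : ∃ j < k, InSpan2 b c (x - j * d) := by
  obtain ⟨α, β, γ, rfl⟩ := hx
  have hγ : (γ : ℤ) * d < k * d := by
    nlinarith [mul_nonneg (Int.natCast_nonneg α) hb, mul_nonneg (Int.natCast_nonneg β) hc]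
  exact ⟨γ, by exact_mod_cast lt_of_mul_lt_mul_right hγ hd.le, α, β, by ring⟩

lemma IsCoprime.exists_pos_eq_mul_mul {p q x : ℤ} (hpq : IsCoprime p q) (hp : 0 < p) (hq : 0 < q)
    (hx : 0 < x) (hpx : p ∣ x) (hqx : q ∣ x) : ∃ t, 0 < t ∧ x = p * q * t := by
  obtain ⟨t, rfl⟩ := hpq.mul_dvd hpx hqx
  exact ⟨t, pos_of_mul_pos_right hx (mul_pos hp hq).le, rfl⟩

namespace IsDelPezzoWCI

variable {a : Fin 5 → ℤ} {d₁ d₂ : ℤ}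

lemma isUnit_of_forall_dvd (h : IsDelPezzoWCI a d₁ d₂) (i : Fin 5) {x : ℤ}
    (hx : ∀ j, j ≠ i → x ∣ a j) : IsUnit x :=
  isUnit_of_dvd_one <| h.wf3 i ▸ Finset.dvd_gcd fun j hj => hx j (by simpa using hj)

lemma dvd_or_dvd_of_dvd_of_dvd (h : IsDelPezzoWCI a d₁ d₂) {i j : Fin 5} (hij : i ≠ j) {x : ℤ}
    (hi : x ∣ a i) (hj : x ∣ a j) : x ∣ d₁ ∨ x ∣ d₂ := by
  have hx : x ∣ ({i, j} : Finset (Fin 5)).gcd a := by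
    refine Finset.dvd_gcd fun k hk => ?_
    rcases Finset.mem_insert.mp hk with rfl | hk
    · exact hi
    · exact Finset.mem_singleton.mp hk ▸ hj
  have hcard : ({i, j} : Finset (Fin 5))ᶜ.card = 3 := by
    rw [Finset.card_compl, Finset.card_pair hij]; rfl
  have hwf := h.wf1 _ hcard
  rw [compl_compl] at hwf
  exact hwf.imp hx.trans hx.trans

lemma inSpan3_d₁_or_sub (h : IsDelPezzoWCI a d₁ d₂) {k l m i : Fin 5} (hkl : k ≠ l) (hkm : k ≠ m)
    (hlm : l ≠ m) (hi : i ∉ ({k, l, m} : Finset (Fin 5))) :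
    InSpan3 (a k) (a l) (a m) d₁ ∨ InSpan3 (a k) (a l) (a m) (d₁ - a i) := by
  rcases h.qs3 k l m hkl hkm hlm with ⟨h₁, -⟩ | ⟨h₁, -⟩ | ⟨-, h₁⟩
  · exact .inl h₁
  · exact .inl h₁
  · exact .inr (h₁ i (Finset.mem_compl.mpr hi))

lemma inSpan3_d₂_or_sub (h : IsDelPezzoWCI a d₁ d₂) {k l m i : Fin 5} (hkl : k ≠ l) (hkm : k ≠ m)
    (hlm : l ≠ m) (hi : i ∉ ({k, l, m} : Finset (Fin 5))) :
    InSpan3 (a k) (a l) (a m) d₂ ∨ InSpan3 (a k) (a l) (a m) (d₂ - a i) := by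
  rcases h.qs3 k l m hkl hkm hlm with ⟨-, h₂⟩ | ⟨-, h₂⟩ | ⟨h₂, -⟩
  · exact .inl h₂
  · exact .inr (h₂ i (Finset.mem_compl.mpr hi))
  · exact .inl h₂

end IsDelPezzoWCI

def SeriesI (ν a₀ a₁ a₂ a₃ a₄ : ℤ) : Prop :=
  ∃ b₀ b₁ : ℤ, 0 < b₀ ∧ b₀ < b₁ ∧ Odd b₀ ∧ Odd b₁ ∧ Int.gcd b₀ b₁ = 1 ∧
    a₀ = 2 * b₀ ∧ a₁ = 2 * b₁ ∧ Even ν ∧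
    a₂ = (ν * b₀ - 1) * b₁ ∧ a₃ = (ν * b₁ - 1) * b₀ ∧ a₄ = 2 * (ν * b₀ * b₁ - b₀ - b₁)

def SeriesII (ν a₀ a₁ a₂ a₃ a₄ : ℤ) : Prop :=
  Odd a₀ ∧ Odd a₁ ∧ Int.gcd a₀ a₁ = 1 ∧ Odd ν ∧
    2 * a₂ = (ν * a₀ - 1) * a₁ ∧ 2 * a₃ = (ν * a₁ - 1) * a₀ ∧ a₄ = ν * a₀ * a₁ - a₀ - a₁

def SeriesIII (ν a₀ a₁ a₂ a₃ a₄ : ℤ) : Prop :=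
  Odd a₀ ∧ Odd a₁ ∧ Int.gcd a₀ a₁ = 1 ∧
    a₂ = (ν * a₀ - 1) * a₁ ∧ 2 * a₃ = 2 * ν * a₀ * a₁ - (a₀ + a₁) ∧
    a₄ = 2 * ν * a₀ * a₁ - a₀ - 2 * a₁

def SeriesIV (ν a₀ a₁ a₂ a₃ a₄ : ℤ) : Prop :=
  Odd a₀ ∧ Odd a₁ ∧ Int.gcd a₀ a₁ = 1 ∧
    2 * a₂ = 2 * (ν * a₀ - 1) * a₁ + (a₁ - a₀) ∧ a₃ = a₀ * (ν * a₁ - 1) ∧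
    a₄ = 2 * ν * a₀ * a₁ - 2 * a₀ - a₁

def SeriesV (ν a₀ a₁ a₂ a₃ a₄ : ℤ) : Prop :=
  Odd a₀ ∧ Odd a₁ ∧ Int.gcd a₀ a₁ = 1 ∧ Odd ν ∧
    2 * a₂ = (ν * a₁ - 1) * a₀ - 2 * a₁ ∧ 2 * a₃ = (ν * a₀ - 1) * a₁ - 2 * a₀ ∧
    a₄ = ν * a₀ * a₁ - 2 * (a₀ + a₁)

section Arithmetic

variable {a₀ a₁ a₂ a₃ a₄ : ℤ}

lemma dvd_two_mul_or_dvd_two_mul_sub_of_inSpan3 (h₀ : 0 < a₀) (h₀₁ : a₀ < a₁) (h₁₂ : a₁ < a₂)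
    (h₂₃ : a₂ < a₃) (h₃₄ : a₃ < a₄) (h₄ : a₄ = 2 * a₂ - a₀)
    (H : InSpan3 a₁ a₃ a₄ (2 * a₂) ∨ InSpan3 a₁ a₃ a₄ a₂) :
    a₁ ∣ 2 * a₂ ∨ a₁ ∣ 2 * a₂ - a₃ := by
  rcases H with H | H
  · obtain ⟨j, hj, hs⟩ := H.exists_inSpan2_sub (k := 2) (by linarith) (by linarith) (by linarith)
      (by push_cast; linarith)
    interval_cases j
    · obtain ⟨i, hi, hdvd⟩ := hs.exists_dvd_sub (k := 2) (by linarith) (by linarith)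
        (by push_cast; linarith)
      interval_cases i
      · exact .inl (by simpa using hdvd)
      · exact .inr (by simpa using hdvd)
    · -- `2a₂ - a₄ = a₀` is too small to be a positive multiple of `a₁`
      obtain ⟨i, hi, hdvd⟩ := hs.exists_dvd_sub (k := 1) (by linarith) (by linarith)
        (by push_cast; linarith)
      obtain rfl : i = 0 := by omega
      rw [h₄] at hdvd
      have := Int.le_of_dvd h₀ (by simpa using hdvd)
      linarith
  · obtain ⟨j, hj, hs⟩ := H.exists_inSpan2_sub (k := 1) (by linarith) (by linarith) (by linarith)
      (by push_cast; linarith)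
    obtain rfl : j = 0 := by omega
    obtain ⟨i, hi, hdvd⟩ := hs.exists_dvd_sub (k := 1) (by linarith) (by linarith)
      (by push_cast; linarith)
    obtain rfl : i = 0 := by omega
    exact .inl (Dvd.dvd.mul_left (by simpa using hdvd) 2)

lemma dvd_or_dvd_two_mul_or_dvd_two_mul_sub_of_inSpan3 (h₀ : 0 < a₀) (h₁₂ : a₁ < a₂)
    (h₂₃ : a₂ < a₃) (h₄ : a₄ = 2 * a₂ - a₀)
    (h₃ : 2 * a₃ = 2 * a₂ + a₁ - a₀) (H : InSpan3 a₀ a₂ a₄ (2 * a₃) ∨ InSpan3 a₀ a₂ a₄ a₃) :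
    a₀ ∣ a₁ ∨ a₀ ∣ 2 * a₃ ∨ a₀ ∣ 2 * a₃ - a₂ := by
  rcases H with H | H
  · obtain ⟨j, hj, hs⟩ := H.exists_inSpan2_sub (k := 2) (by linarith) (by linarith) (by linarith)
      (by push_cast; linarith)
    interval_cases j
    · obtain ⟨i, hi, hdvd⟩ := hs.exists_dvd_sub (k := 3) (by linarith) (by linarith)
        (by push_cast; linarith)
      interval_cases i
      · exact .inr (.inl (by simpa using hdvd))
      · exact .inr (.inr (by simpa using hdvd))
      · -- `2a₃ - 2a₂ = a₁ - a₀`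
        refine .inl (dvd_sub_self_right.mp (hdvd.trans (dvd_of_eq ?_)))
        push_cast
        linarith
    · obtain ⟨i, hi, hdvd⟩ := hs.exists_dvd_sub (k := 1) (by linarith) (by linarith)
        (by push_cast; linarith)
      obtain rfl : i = 0 := by omega
      -- `2a₃ - a₄ = a₁`
      refine .inl (hdvd.trans (dvd_of_eq ?_))
      push_cast
      linarith
  · obtain ⟨j, hj, hs⟩ := H.exists_inSpan2_sub (k := 1) (by linarith) (by linarith) (by linarith)
      (by push_cast; linarith)
    obtain rfl : j = 0 := by omega
    obtain ⟨i, hi, hdvd⟩ := hs.exists_dvd_sub (k := 2) (by linarith) (by linarith)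
      (by push_cast; linarith)
    interval_cases i
    · exact .inr (.inl (Dvd.dvd.mul_left (by simpa using hdvd) 2))
    · refine .inl (dvd_sub_self_right.mp ((hdvd.mul_left 2).trans (dvd_of_eq ?_)))
      push_cast
      linarith

lemma seriesI_of_even {b₀ b₁ : ℤ} (hb₀ : 0 < b₀) (hb₀₁ : b₀ < b₁) (h₂ : 0 < a₂)
    (h₃ : 2 * a₃ = 2 * a₂ + 2 * b₁ - 2 * b₀) (h₄ : a₄ = 2 * a₃ - 2 * b₁)
    (ha₂ : Odd a₂) (ha₃ : Odd a₃) (hcop : IsCoprime b₀ b₁)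
    (hQ : 2 * b₁ ∣ 2 * a₂ ∨ 2 * b₁ ∣ 2 * a₂ - a₃)
    (hP : 2 * b₀ ∣ 2 * b₁ ∨ 2 * b₀ ∣ 2 * a₃ ∨ 2 * b₀ ∣ 2 * a₃ - a₂) :
    ∃ ν, 0 < ν ∧ SeriesI ν (2 * b₀) (2 * b₁) a₂ a₃ a₄ := by
  have hb₁a₂ : b₁ ∣ a₂ := by
    rcases hQ with h | h
    · exact (mul_dvd_mul_iff_left two_ne_zero).mp h
    · have := (dvd_mul_right 2 b₁).trans h
      rw [Int.odd_iff] at ha₃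
      omega
  have hb₁o : Odd b₁ := ha₂.of_dvd_int hb₁a₂
  have hb₀o : Odd b₀ := by
    rw [Int.odd_iff] at *
    omega
  have hb₀a₂ : b₀ ∣ a₂ + b₁ := by
    rcases hP with h | h | h
    · exact (hcop.isUnit_of_dvd' dvd_rfl ((mul_dvd_mul_iff_left two_ne_zero).mp h)).dvd
    · rw [show a₂ + b₁ = a₃ + b₀ by linarith]
      exact dvd_add_self_right.mpr ((mul_dvd_mul_iff_left two_ne_zero).mp h)
    · have := (dvd_mul_right 2 b₀).trans h
      rw [Int.odd_iff] at ha₂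
      omega
  obtain ⟨ν, hν, hx⟩ := hcop.exists_pos_eq_mul_mul hb₀ (by linarith) (by linarith) hb₀a₂
    (dvd_add_self_right.mpr hb₁a₂)
  have hνe : Even ν :=
    (Int.even_mul.mp (hx ▸ ha₂.add_odd hb₁o)).resolve_left
      (Int.not_even_iff_odd.mpr (hb₀o.mul hb₁o))
  exact ⟨ν, hν, b₀, b₁, hb₀, hb₀₁, hb₀o, hb₁o, Int.isCoprime_iff_gcd_eq_one.mp hcop, rfl, rfl, hνe,
    by linear_combination hx, mul_left_cancel₀ two_ne_zero (by linear_combination 2 * hx + h₃),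
    by linear_combination 2 * hx + h₃ + h₄⟩

lemma series_of_odd (h₀ : 0 < a₀) (h₀₁ : a₀ < a₁) (h₁₂ : a₁ < a₂)
    (h₃ : 2 * a₃ = 2 * a₂ + a₁ - a₀) (h₄ : a₄ = 2 * a₃ - a₁)
    (ha₀ : Odd a₀) (ha₁ : Odd a₁) (hcop : IsCoprime a₀ a₁)
    (hQ : a₁ ∣ 2 * a₂ ∨ a₁ ∣ 2 * a₂ - a₃) (hP : a₀ ∣ a₁ ∨ a₀ ∣ 2 * a₃ ∨ a₀ ∣ 2 * a₃ - a₂) :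
    ∃ ν, 0 < ν ∧ (SeriesII ν a₀ a₁ a₂ a₃ a₄ ∨ SeriesIII ν a₀ a₁ a₂ a₃ a₄ ∨
      SeriesIV ν a₀ a₁ a₂ a₃ a₄ ∨ SeriesV ν a₀ a₁ a₂ a₃ a₄) := by
  have hg : Int.gcd a₀ a₁ = 1 := Int.isCoprime_iff_gcd_eq_one.mp hcop
  have hQ' : a₁ ∣ 2 * a₂ ∨ a₁ ∣ 2 * a₂ + a₀ := hQ.imp_right fun h => by
    rw [show 2 * a₂ + a₀ = 2 * (2 * a₂ - a₃) + a₁ by linarith]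
    exact dvd_add_self_right.mpr (h.mul_left 2)
  have hP' : a₀ ∣ 2 * a₂ + a₁ ∨ a₀ ∣ a₂ + a₁ := by
    rcases hP with h | h | h
    · exact .inl (hcop.isUnit_of_dvd' dvd_rfl h).dvd
    · rw [show 2 * a₂ + a₁ = 2 * a₃ + a₀ by linarith]
      exact .inl (dvd_add_self_right.mpr h)
    · rw [show a₂ + a₁ = 2 * a₃ - a₂ + a₀ by linarith]
      exact .inr (dvd_add_self_right.mpr h)
  rcases hQ' with hQ' | hQ' <;> rcases hP' with hP' | hP'
  · obtain ⟨ν, hν, hx⟩ := hcop.exists_pos_eq_mul_mul h₀ (by linarith) (by linarith) hP'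
      (dvd_add_self_right.mpr hQ')
    have hνo : Odd ν := (Int.odd_mul.mp (hx ▸ (even_two_mul a₂).add_odd ha₁)).2
    exact ⟨ν, hν, .inl ⟨ha₀, ha₁, hg, hνo, by linear_combination hx,
      by linear_combination hx + h₃, by linear_combination hx + h₃ + h₄⟩⟩
  · have hQ'' : a₁ ∣ a₂ := (Int.isCoprime_two_right.mpr ha₁).dvd_of_dvd_mul_left hQ'
    obtain ⟨ν, hν, hx⟩ := hcop.exists_pos_eq_mul_mul h₀ (by linarith) (by linarith) hP'
      (dvd_add_self_right.mpr hQ'')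
    exact ⟨ν, hν, .inr (.inl ⟨ha₀, ha₁, hg, by linear_combination hx,
      by linear_combination 2 * hx + h₃, by linear_combination 2 * hx + h₃ + h₄⟩)⟩
  · obtain ⟨t, ht, hx⟩ := hcop.exists_pos_eq_mul_mul (x := 2 * a₂ + a₁ + a₀) h₀ (by linarith)
      (by linarith) (dvd_add_self_right.mpr hP')
      (by rw [add_right_comm]; exact dvd_add_self_right.mpr hQ')
    have hte : Even t := (Int.even_mul.mp (hx ▸ ((even_two_mul a₂).add_odd ha₁).add_odd ha₀))
      |>.resolve_left (Int.not_even_iff_odd.mpr (ha₀.mul ha₁))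
    obtain ⟨ν, rfl⟩ := hte.two_dvd
    exact ⟨ν, by linarith, .inr (.inr (.inl ⟨ha₀, ha₁, hg, by linear_combination hx,
      mul_left_cancel₀ two_ne_zero (by linear_combination hx + h₃),
      by linear_combination hx + h₃ + h₄⟩))⟩
  · obtain ⟨ν, hν, hx⟩ := hcop.exists_pos_eq_mul_mul (x := 2 * (a₂ + a₁) + a₀) h₀ (by linarith)
      (by linarith) (dvd_add_self_right.mpr (hP'.mul_left 2))
      (by rw [show 2 * (a₂ + a₁) + a₀ = 2 * a₂ + a₀ + 2 * a₁ by ring]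
          exact dvd_add hQ' (dvd_mul_left a₁ 2))
    have hνo : Odd ν := (Int.odd_mul.mp (hx ▸ (even_two_mul (a₂ + a₁)).add_odd ha₀)).2
    exact ⟨ν, hν, .inr (.inr (.inr ⟨ha₀, ha₁, hg, hνo, by linear_combination hx,
      by linear_combination hx + h₃, by linear_combination hx + h₃ + h₄⟩))⟩

lemma exists_series (h₀ : 0 < a₀) (h₀₁ : a₀ < a₁) (h₁₂ : a₁ < a₂)
    (h₃ : 2 * a₃ = 2 * a₂ + a₁ - a₀) (h₄ : a₄ = 2 * a₃ - a₁)
    (hdvd₂ : ∀ x, x ∣ a₀ → x ∣ a₁ → x ∣ 2 * a₂)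
    (hunit₂ : ∀ x, x ∣ a₀ → x ∣ a₁ → x ∣ a₂ → IsUnit x)
    (hunit₃ : ∀ x, x ∣ a₀ → x ∣ a₁ → x ∣ a₃ → IsUnit x)
    (hQ : a₁ ∣ 2 * a₂ ∨ a₁ ∣ 2 * a₂ - a₃) (hP : a₀ ∣ a₁ ∨ a₀ ∣ 2 * a₃ ∨ a₀ ∣ 2 * a₃ - a₂) :
    ∃ ν, 0 < ν ∧ (SeriesI ν a₀ a₁ a₂ a₃ a₄ ∨ SeriesII ν a₀ a₁ a₂ a₃ a₄ ∨
      SeriesIII ν a₀ a₁ a₂ a₃ a₄ ∨ SeriesIV ν a₀ a₁ a₂ a₃ a₄ ∨ SeriesV ν a₀ a₁ a₂ a₃ a₄) := by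
  rcases Int.even_or_odd a₀ with ha₀ | ha₀
  · obtain ⟨b₀, rfl⟩ := ha₀.two_dvd
    obtain ⟨b₁, rfl⟩ : 2 ∣ a₁ := by omega
    have two_not_isUnit : ¬IsUnit (2 : ℤ) := by simp [Int.isUnit_iff]
    have ha₂ : Odd a₂ := Int.not_even_iff_odd.mp fun h => two_not_isUnit <|
      hunit₂ 2 (dvd_mul_right 2 b₀) (dvd_mul_right 2 b₁) h.two_dvd
    have ha₃ : Odd a₃ := Int.not_even_iff_odd.mp fun h => two_not_isUnit <|
      hunit₃ 2 (dvd_mul_right 2 b₀) (dvd_mul_right 2 b₁) h.two_dvd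
    have hcop : IsCoprime b₀ b₁ := IsRelPrime.isCoprime fun x hx₀ hx₁ =>
      hunit₂ x (hx₀.mul_left 2) (hx₁.mul_left 2) <| (mul_dvd_mul_iff_left two_ne_zero).mp <|
        hdvd₂ (2 * x) (mul_dvd_mul_left 2 hx₀) (mul_dvd_mul_left 2 hx₁)
    obtain ⟨ν, hν, hs⟩ := seriesI_of_even (by linarith) (by linarith) (by linarith) h₃ h₄ ha₂ ha₃
      hcop hQ hP
    exact ⟨ν, hν, .inl hs⟩
  · have ha₁ : Odd a₁ := by
      rw [Int.odd_iff] at *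
      omega
    have hcop : IsCoprime a₀ a₁ := IsRelPrime.isCoprime fun x hx₀ hx₁ =>
      hunit₂ x hx₀ hx₁ <| (Int.isCoprime_two_right.mpr (ha₀.of_dvd_int hx₀)).dvd_of_dvd_mul_left <|
        hdvd₂ x hx₀ hx₁
    obtain ⟨ν, hν, hs⟩ := series_of_odd h₀ h₀₁ h₁₂ h₃ h₄ ha₀ ha₁ hcop hQ hP
    exact ⟨ν, hν, .inr hs⟩

end Arithmetic

theorem case01_subcase2_series (a : Fin 5 → ℤ) (d₁ d₂ : ℤ) (h : IsDelPezzoWCI a d₁ d₂)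
    (hdist : ∀ i j : Fin 5, i < j → a i < a j)
    (hd₁ : d₁ = a 0 + a 4) (hd₂ : d₂ = a 1 + a 4)
    (h4 : a 4 = 2 * a 3 - a 1) (h3 : 2 * a 3 = 2 * a 2 + a 1 - a 0) :
    ∃ ν : ℤ, 0 < ν ∧
      ((∃ b₀ b₁ : ℤ, 0 < b₀ ∧ b₀ < b₁ ∧ Odd b₀ ∧ Odd b₁ ∧ Int.gcd b₀ b₁ = 1 ∧
        a 0 = 2 * b₀ ∧ a 1 = 2 * b₁ ∧ Even ν ∧
        a 2 = (ν * b₀ - 1) * b₁ ∧ a 3 = (ν * b₁ - 1) * b₀ ∧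
        a 4 = 2 * (ν * b₀ * b₁ - b₀ - b₁)) ∨
       (Odd (a 0) ∧ Odd (a 1) ∧ Int.gcd (a 0) (a 1) = 1 ∧ Odd ν ∧
        2 * a 2 = (ν * a 0 - 1) * a 1 ∧ 2 * a 3 = (ν * a 1 - 1) * a 0 ∧
        a 4 = ν * a 0 * a 1 - a 0 - a 1) ∨
       (Odd (a 0) ∧ Odd (a 1) ∧ Int.gcd (a 0) (a 1) = 1 ∧
        a 2 = (ν * a 0 - 1) * a 1 ∧ 2 * a 3 = 2 * ν * a 0 * a 1 - (a 0 + a 1) ∧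
        a 4 = 2 * ν * a 0 * a 1 - a 0 - 2 * a 1) ∨
       (Odd (a 0) ∧ Odd (a 1) ∧ Int.gcd (a 0) (a 1) = 1 ∧
        2 * a 2 = 2 * (ν * a 0 - 1) * a 1 + (a 1 - a 0) ∧ a 3 = a 0 * (ν * a 1 - 1) ∧
        a 4 = 2 * ν * a 0 * a 1 - 2 * a 0 - a 1) ∨
       (Odd (a 0) ∧ Odd (a 1) ∧ Int.gcd (a 0) (a 1) = 1 ∧ Odd ν ∧
        2 * a 2 = (ν * a 1 - 1) * a 0 - 2 * a 1 ∧ 2 * a 3 = (ν * a 0 - 1) * a 1 - 2 * a 0 ∧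
        a 4 = ν * a 0 * a 1 - 2 * (a 0 + a 1))) := by
  obtain ⟨h₀₁, h₁₂, h₂₃, h₃₄⟩ : a 0 < a 1 ∧ a 1 < a 2 ∧ a 2 < a 3 ∧ a 3 < a 4 :=
    ⟨hdist 0 1 (by decide), hdist 1 2 (by decide), hdist 2 3 (by decide), hdist 3 4 (by decide)⟩
  have h4' : a 4 = 2 * a 2 - a 0 := by linarith
  obtain ⟨hd₁', hd₂'⟩ : d₁ = 2 * a 2 ∧ d₂ = 2 * a 3 := ⟨by linarith, by linarith⟩
  have hQ := h.inSpan3_d₁_or_sub (k := 1) (l := 3) (m := 4) (i := 2) (by decide) (by decide)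
    (by decide) (by decide)
  rw [hd₁', two_mul, add_sub_cancel_right, ← two_mul] at hQ
  have hP := h.inSpan3_d₂_or_sub (k := 0) (l := 2) (m := 4) (i := 3) (by decide) (by decide)
    (by decide) (by decide)
  rw [hd₂', two_mul, add_sub_cancel_right, ← two_mul] at hP
  have hdvd₂ (x : ℤ) (h0 : x ∣ a 0) (h1 : x ∣ a 1) : x ∣ 2 * a 2 := by
    rcases h.dvd_or_dvd_of_dvd_of_dvd (i := 0) (j := 1) (by decide) h0 h1 with hx | hx
    · rwa [hd₁'] at hx
    · exact (show 2 * a 2 = d₂ - a 1 + a 0 by linarith) ▸ dvd_add (dvd_sub hx h1) h0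
  have hunit₂ (x : ℤ) (h0 : x ∣ a 0) (h1 : x ∣ a 1) (h2 : x ∣ a 2) : IsUnit x :=
    h.isUnit_of_forall_dvd 3 fun j hj => by
      fin_cases j
      exacts [h0, h1, h2, absurd rfl hj, h4' ▸ dvd_sub (h2.mul_left 2) h0]
  have hunit₃ (x : ℤ) (h0 : x ∣ a 0) (h1 : x ∣ a 1) (h3 : x ∣ a 3) : IsUnit x :=
    h.isUnit_of_forall_dvd 2 fun j hj => by
      fin_cases j
      exacts [h0, h1, absurd rfl hj, h3, h4 ▸ dvd_sub (h3.mul_left 2) h1]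
  exact exists_series (h.a_pos 0) h₀₁ h₁₂ h3 h4 hdvd₂ hunit₂ hunit₃
    (dvd_two_mul_or_dvd_two_mul_sub_of_inSpan3 (h.a_pos 0) h₀₁ h₁₂ h₂₃ h₃₄ h4' hQ)
    (dvd_or_dvd_two_mul_or_dvd_two_mul_sub_of_inSpan3 (h.a_pos 0) h₁₂ h₂₃ h4' h3 hP)
end
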